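/- arXiv:2105.06784 — 7 statements merged into one kernel-verified Lean document; each statement's English description precedes it below -/
import Mathlib

section
/- Let R = ⟨A, S, R, D, γ⟩ be an RDP whose dynamics are represented by a finite transducer T = ⟨Q, q₀, S, τ, θ⟩, and let M be its ideal MDP. Then the optimal value function of R satisfies V_*(h) = V^M_*(τ(q₀, h)) for every history h ∈ S*. -/
/-- Extension of a deterministic transition function to strings (histories). -/
def tauStar {Q S : Type*} (τ : Q → S → Q) : Q → List S → Q
  | q, [] => q
  | q, s :: h => tauStar τ (τ q s) h

lemma tauStar_append {Q S : Type*} (τ : Q → S → Q) (q : Q) (h : List S) (s : S) :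
    tauStar τ q (h ++ [s]) = τ (tauStar τ q h) s := by
  induction h generalizing q with
  | nil => rfl
  | cons x t ih => simp [tauStar, ih]

lemma abs_sup'_sub_sup'_le {α : Type*} (s : Finset α) (hs : s.Nonempty)
    (f g : α → ℝ) (c : ℝ) (hc : ∀ a ∈ s, |f a - g a| ≤ c) :
    |s.sup' hs f - s.sup' hs g| ≤ c := by
  rw [abs_sub_le_iff]
  constructor
  · rw [sub_le_iff_le_add]
    apply Finset.sup'_le
    intro a ha
    have := hc a ha
    have h1 : f a - g a ≤ c := (abs_le.mp this).2
    have h2 : g a ≤ s.sup' hs g := Finset.le_sup' g ha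
    linarith
  · rw [sub_le_iff_le_add]
    apply Finset.sup'_le
    intro a ha
    have := hc a ha
    have h1 : g a - f a ≤ c := by
      rw [abs_sub_comm] at this; exact (abs_le.mp this).2
    have h2 : f a ≤ s.sup' hs f := Finset.le_sup' f ha
    linarith

/-- For an RDP whose dynamics are represented by a finite transducer
`⟨Q, q₀, S, τ, θ⟩`, the optimal value function of the RDP satisfies
`V_*(h) = V^M_*(τ(q₀, h))` for every history `h`, where `M` is the ideal MDP. -/
theorem rdp_optimal_value_eq_ideal_mdp_value
    {A S Q R : Type*} [Fintype A] [Nonempty A] [Fintype S] [Nonempty S]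
    [Fintype Q] [Fintype R] [DecidableEq Q]
    -- rewards: finite set of non-negative reals
    (rval : R → ℝ) (hrval : ∀ r, 0 ≤ rval r)
    -- discount factor
    (γ : ℝ) (hγ0 : 0 < γ) (hγ1 : γ < 1)
    -- dynamics function: a probability distribution on S × R for every history and action
    (D : List S → A → S → R → ℝ)
    (hD0 : ∀ h a s r, 0 ≤ D h a s r)
    (hD1 : ∀ h a, (∑ s : S, ∑ r : R, D h a s r) = 1)
    -- transducer representing the dynamics
    (q₀ : Q) (τ : Q → S → Q) (θ : Q → A → S → R → ℝ)
    (hrep : ∀ h a s r, D h a s r = θ (tauStar τ q₀ h) a s r)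
    -- optimal value of the RDP: the unique bounded solution of the Bellman equation
    (V : List S → ℝ)
    (hVbdd : ∃ C : ℝ, ∀ h, |V h| ≤ C)
    (hV : ∀ h : List S, V h = Finset.univ.sup' Finset.univ_nonempty
      (fun a : A => ∑ s : S, ∑ r : R, D h a s r * (rval r + γ * V (h ++ [s]))))
    -- optimal value of the ideal MDP: the unique solution of its Bellman equation,
    -- where D^M(q',r|q,a) = ∑_{s : τ(q,s) = q'} θ(q)(a,s,r)
    (VM : Q → ℝ)
    (hVM : ∀ q : Q, VM q = Finset.univ.sup' Finset.univ_nonempty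
      (fun a : A => ∑ q' : Q, ∑ r : R,
        (∑ s : S, if τ q s = q' then θ q a s r else 0) * (rval r + γ * VM q'))) :
    ∀ h : List S, V h = VM (tauStar τ q₀ h) := by
  classical
  obtain ⟨C0, hC0⟩ := hVbdd
  have hQne : Nonempty Q := ⟨q₀⟩
  -- rewrite the MDP Bellman sum as a sum over observations
  have hM : ∀ q a, (∑ q' : Q, ∑ r : R,
      (∑ s : S, if τ q s = q' then θ q a s r else 0) * (rval r + γ * VM q'))
      = ∑ s : S, ∑ r : R, θ q a s r * (rval r + γ * VM (τ q s)) := by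
    intro q a
    rw [Finset.sum_comm]
    have key : ∀ r : R, (∑ q' : Q,
        (∑ s : S, if τ q s = q' then θ q a s r else 0) * (rval r + γ * VM q'))
        = ∑ s : S, θ q a s r * (rval r + γ * VM (τ q s)) := by
      intro r
      simp only [Finset.sum_mul]
      rw [Finset.sum_comm]
      refine Finset.sum_congr rfl fun s _ => ?_
      simp only [ite_mul, zero_mul]
      simpa using Finset.sum_ite_eq Finset.univ (τ q s)
        (fun q' => θ q a s r * (rval r + γ * VM q'))
    simp only [key]
    rw [Finset.sum_comm]
  -- global bound on the difference
  set CM : ℝ := Finset.univ.sup' (Finset.univ_nonempty (α := Q)) (fun q => |VM q|) with hCM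
  have hCMle : ∀ q : Q, |VM q| ≤ CM := fun q =>
    Finset.le_sup' (f := fun q => |VM q|) (Finset.mem_univ q)
  set C : ℝ := C0 + CM with hC
  have hbound : ∀ h : List S, |V h - VM (tauStar τ q₀ h)| ≤ C := by
    intro h
    calc |V h - VM (tauStar τ q₀ h)| ≤ |V h| + |VM (tauStar τ q₀ h)| := abs_sub _ _
      _ ≤ C0 + CM := add_le_add (hC0 h) (hCMle _)
  have hCnn : 0 ≤ C := le_trans (abs_nonneg _) (hbound [])
  -- contraction estimate iterated
  have key : ∀ n : ℕ, ∀ h : List S, |V h - VM (tauStar τ q₀ h)| ≤ γ ^ n * C := by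
    intro n
    induction n with
    | zero => intro h; simpa using hbound h
    | succ n ih =>
      intro h
      set q := tauStar τ q₀ h with hq
      rw [hV h, hVM q]
      apply abs_sup'_sub_sup'_le
      intro a _
      rw [hM q a]
      have hs : (fun s r => D h a s r) = fun s r => θ q a s r := by
        funext s r; exact hrep h a s r
      simp only [hrep h a]
      rw [← hq]
      have diff : (∑ s : S, ∑ r : R, θ q a s r * (rval r + γ * V (h ++ [s])))
          - (∑ s : S, ∑ r : R, θ q a s r * (rval r + γ * VM (τ q s)))
          = ∑ s : S, ∑ r : R, θ q a s r * (γ * (V (h ++ [s]) - VM (τ q s))) := by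
        rw [← Finset.sum_sub_distrib]
        refine Finset.sum_congr rfl fun s _ => ?_
        rw [← Finset.sum_sub_distrib]
        refine Finset.sum_congr rfl fun r _ => ?_
        ring
      rw [diff]
      have hθnn : ∀ s r, 0 ≤ θ q a s r := fun s r => (hrep h a s r) ▸ hD0 h a s r
      have hθ1 : (∑ s : S, ∑ r : R, θ q a s r) = 1 := by
        rw [← hD1 h a]
        exact Finset.sum_congr rfl fun s _ => Finset.sum_congr rfl fun r _ =>
          (hrep h a s r).symm
      calc |∑ s : S, ∑ r : R, θ q a s r * (γ * (V (h ++ [s]) - VM (τ q s)))|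
          ≤ ∑ s : S, |∑ r : R, θ q a s r * (γ * (V (h ++ [s]) - VM (τ q s)))| :=
            Finset.abs_sum_le_sum_abs _ _
        _ ≤ ∑ s : S, ∑ r : R, |θ q a s r * (γ * (V (h ++ [s]) - VM (τ q s)))| :=
            Finset.sum_le_sum fun s _ => Finset.abs_sum_le_sum_abs _ _
        _ ≤ ∑ s : S, ∑ r : R, θ q a s r * (γ * (γ ^ n * C)) := by
            refine Finset.sum_le_sum fun s _ => Finset.sum_le_sum fun r _ => ?_
            rw [abs_mul, abs_of_nonneg (hθnn s r)]
            apply mul_le_mul_of_nonneg_left _ (hθnn s r)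
            rw [abs_mul, abs_of_pos hγ0]
            apply mul_le_mul_of_nonneg_left _ hγ0.le
            have := ih (h ++ [s])
            rwa [tauStar_append, ← hq] at this
        _ = γ ^ (n + 1) * C := by
            simp only [← Finset.sum_mul, hθ1]
            ring
  intro h
  have hd : |V h - VM (tauStar τ q₀ h)| ≤ 0 := by
    have hlim : Filter.Tendsto (fun n : ℕ => γ ^ n * C) Filter.atTop (nhds 0) := by
      simpa using (tendsto_pow_atTop_nhds_zero_of_lt_one hγ0.le hγ1).mul_const C
    exact ge_of_tendsto' hlim (fun n => key n h)
  have := abs_nonneg (V h - VM (tauStar τ q₀ h))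
  have : |V h - VM (tauStar τ q₀ h)| = 0 := le_antisymm hd this
  have := abs_eq_zero.mp this
  linarith [sub_eq_zero.mp this]
end

section
/- Let R = ⟨A, S, R, D, γ⟩ be an RDP whose dynamics are represented by a finite transducer T = ⟨Q, q₀, S, τ, θ⟩, and let M be its ideal MDP. Then the optimal action-value function of R satisfies Q_*(h, a) = Q^M_*(τ(q₀, h), a) for every history h ∈ S* and action a ∈ A. -/
/-- For an RDP whose dynamics are represented by a finite transducer
`⟨Q, q₀, S, τ, θ⟩`, the optimal action-value function of the RDP satisfies
`Q_*(h, a) = Q^M_*(τ(q₀, h), a)` for every history `h` and action `a`,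
where `M` is the ideal MDP. -/
theorem rdp_optimal_action_value_eq_ideal_mdp_action_value
    {A S Q R : Type*} [Fintype A] [Nonempty A] [Fintype S] [Nonempty S]
    [Fintype Q] [Fintype R] [DecidableEq Q]
    -- rewards: finite set of non-negative reals
    (rval : R → ℝ) (hrval : ∀ r, 0 ≤ rval r)
    -- discount factor
    (γ : ℝ) (hγ0 : 0 < γ) (hγ1 : γ < 1)
    -- dynamics function: a probability distribution on S × R for every history and action
    (D : List S → A → S → R → ℝ)
    (hD0 : ∀ h a s r, 0 ≤ D h a s r)
    (hD1 : ∀ h a, (∑ s : S, ∑ r : R, D h a s r) = 1)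
    -- transducer representing the dynamics
    (q₀ : Q) (τ : Q → S → Q) (θ : Q → A → S → R → ℝ)
    (hrep : ∀ h a s r, D h a s r = θ (tauStar τ q₀ h) a s r)
    -- optimal value of the RDP: the unique bounded solution of the Bellman equation
    (V : List S → ℝ)
    (hVbdd : ∃ C : ℝ, ∀ h, |V h| ≤ C)
    (hV : ∀ h : List S, V h = Finset.univ.sup' Finset.univ_nonempty
      (fun a : A => ∑ s : S, ∑ r : R, D h a s r * (rval r + γ * V (h ++ [s]))))
    -- optimal action-value of the RDP
    (Qstar : List S → A → ℝ)
    (hQstar : ∀ h a, Qstar h a = ∑ s : S, ∑ r : R, D h a s r * (rval r + γ * V (h ++ [s])))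
    -- optimal value of the ideal MDP: the unique solution of its Bellman equation,
    -- where D^M(q',r|q,a) = ∑_{s : τ(q,s) = q'} θ(q)(a,s,r)
    (VM : Q → ℝ)
    (hVM : ∀ q : Q, VM q = Finset.univ.sup' Finset.univ_nonempty
      (fun a : A => ∑ q' : Q, ∑ r : R,
        (∑ s : S, if τ q s = q' then θ q a s r else 0) * (rval r + γ * VM q')))
    -- optimal action-value of the ideal MDP
    (QMstar : Q → A → ℝ)
    (hQMstar : ∀ q a, QMstar q a = ∑ q' : Q, ∑ r : R,
      (∑ s : S, if τ q s = q' then θ q a s r else 0) * (rval r + γ * VM q')) :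
    ∀ (h : List S) (a : A), Qstar h a = QMstar (tauStar τ q₀ h) a := by

  haveI : Nonempty Q := ⟨q₀⟩
  have hγ0' : (0:ℝ) ≤ γ := le_of_lt hγ0
  have htau : ∀ (h : List S) (q : Q) (s : S),
      tauStar τ q (h ++ [s]) = τ (tauStar τ q h) s := by
    intro h
    induction h with
    | nil => intro q s; rfl
    | cons x t ih => intro q s; simp [tauStar, ih]
  set F : List S → Q := fun h => tauStar τ q₀ h with hF
  -- simplification of the MDP action-value sum
  have hMsum : ∀ (q : Q) (a : A),
      (∑ q' : Q, ∑ r : R, (∑ s : S, if τ q s = q' then θ q a s r else 0)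
        * (rval r + γ * VM q'))
      = ∑ s : S, ∑ r : R, θ q a s r * (rval r + γ * VM (τ q s)) := by
    intro q a
    rw [Finset.sum_comm]
    rw [show (∑ s : S, ∑ r : R, θ q a s r * (rval r + γ * VM (τ q s)))
        = ∑ r : R, ∑ s : S, θ q a s r * (rval r + γ * VM (τ q s)) from Finset.sum_comm]
    apply Finset.sum_congr rfl
    intro r _
    calc (∑ q' : Q, (∑ s : S, if τ q s = q' then θ q a s r else 0) * (rval r + γ * VM q'))
        = ∑ q' : Q, ∑ s : S, (if τ q s = q' then θ q a s r * (rval r + γ * VM q') else 0) := by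
          apply Finset.sum_congr rfl
          intro q' _
          rw [Finset.sum_mul]
          apply Finset.sum_congr rfl
          intro s _
          rw [ite_mul, zero_mul]
      _ = ∑ s : S, ∑ q' : Q, (if τ q s = q' then θ q a s r * (rval r + γ * VM q') else 0) :=
          Finset.sum_comm
      _ = ∑ s : S, θ q a s r * (rval r + γ * VM (τ q s)) := by
          apply Finset.sum_congr rfl
          intro s _
          simp [Finset.sum_ite_eq]
  obtain ⟨C0, hC0⟩ := hVbdd
  set C1 : ℝ := Finset.univ.sup' Finset.univ_nonempty (fun q : Q => |VM q|) with hC1def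
  have hC1 : ∀ q : Q, |VM q| ≤ C1 := fun q =>
    Finset.le_sup' (fun q : Q => |VM q|) (Finset.mem_univ q)
  set C : ℝ := C0 + C1 with hCdef
  have hd : ∀ h : List S, |V h - VM (F h)| ≤ C := by
    intro h
    calc |V h - VM (F h)| ≤ |V h| + |VM (F h)| := abs_sub _ _
      _ ≤ C0 + C1 := add_le_add (hC0 h) (hC1 _)
  have hC : (0:ℝ) ≤ C := le_trans (abs_nonneg _) (hd [])
  -- sup' difference bound
  have habs_sup : ∀ (f g : A → ℝ) (ε : ℝ), (∀ a, |f a - g a| ≤ ε) →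
      |Finset.univ.sup' Finset.univ_nonempty f - Finset.univ.sup' Finset.univ_nonempty g| ≤ ε := by
    intro f g ε hfg
    rw [abs_sub_le_iff]
    constructor
    · rw [sub_le_iff_le_add]
      apply Finset.sup'_le
      intro a _
      have h1 := (abs_sub_le_iff.mp (hfg a)).1
      have h2 : g a ≤ Finset.univ.sup' Finset.univ_nonempty g :=
        Finset.le_sup' g (Finset.mem_univ a)
      linarith
    · rw [sub_le_iff_le_add]
      apply Finset.sup'_le
      intro a _
      have h1 := (abs_sub_le_iff.mp (hfg a)).2
      have h2 : f a ≤ Finset.univ.sup' Finset.univ_nonempty f :=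
        Finset.le_sup' f (Finset.mem_univ a)
      linarith
  -- key contraction estimate
  have key : ∀ (n : ℕ) (h : List S), |V h - VM (F h)| ≤ γ ^ n * C := by
    intro n
    induction n with
    | zero => intro h; simpa using hd h
    | succ n ih =>
      intro h
      rw [hV h, hVM (F h)]
      apply habs_sup
      intro a
      have hdiff : (∑ s : S, ∑ r : R, D h a s r * (rval r + γ * V (h ++ [s])))
          - (∑ q' : Q, ∑ r : R, (∑ s : S, if τ (F h) s = q' then θ (F h) a s r else 0)
              * (rval r + γ * VM q'))
          = ∑ s : S, ∑ r : R, D h a s r * γ * (V (h ++ [s]) - VM (F (h ++ [s]))) := by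
        rw [hMsum, ← Finset.sum_sub_distrib]
        apply Finset.sum_congr rfl
        intro s _
        rw [← Finset.sum_sub_distrib]
        apply Finset.sum_congr rfl
        intro r _
        have h1 : θ (F h) a s r = D h a s r := (hrep h a s r).symm
        have h2 : F (h ++ [s]) = τ (F h) s := htau h q₀ s
        rw [h1, h2]
        ring
      rw [hdiff]
      calc |∑ s : S, ∑ r : R, D h a s r * γ * (V (h ++ [s]) - VM (F (h ++ [s])))|
          ≤ ∑ s : S, |∑ r : R, D h a s r * γ * (V (h ++ [s]) - VM (F (h ++ [s])))| :=
            Finset.abs_sum_le_sum_abs _ _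
        _ ≤ ∑ s : S, ∑ r : R, |D h a s r * γ * (V (h ++ [s]) - VM (F (h ++ [s])))| :=
            Finset.sum_le_sum (fun s _ => Finset.abs_sum_le_sum_abs _ _)
        _ ≤ ∑ s : S, ∑ r : R, D h a s r * γ * (γ ^ n * C) := by
            apply Finset.sum_le_sum
            intro s _
            apply Finset.sum_le_sum
            intro r _
            rw [abs_mul, abs_mul, abs_of_nonneg (hD0 h a s r), abs_of_nonneg hγ0']
            have := ih (h ++ [s])
            have hnn : 0 ≤ D h a s r * γ := mul_nonneg (hD0 h a s r) hγ0'
            exact mul_le_mul_of_nonneg_left this hnn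
        _ = γ ^ (n + 1) * C := by
            simp_rw [mul_assoc, ← Finset.sum_mul]
            rw [hD1 h a, one_mul, pow_succ]
            ring
  have hzero : ∀ h : List S, V h = VM (F h) := by
    intro h
    have hl : Filter.Tendsto (fun n : ℕ => γ ^ n * C) Filter.atTop (nhds 0) := by
      have := tendsto_pow_atTop_nhds_zero_of_lt_one hγ0' hγ1
      simpa using this.mul_const C
    have hle : |V h - VM (F h)| ≤ 0 :=
      ge_of_tendsto hl (Filter.Eventually.of_forall fun n => key n h)
    have := abs_nonpos_iff.mp hle
    linarith [sub_eq_zero.mp this]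
  intro h a
  rw [hQstar, hQMstar, hMsum]
  apply Finset.sum_congr rfl
  intro s _
  apply Finset.sum_congr rfl
  intro r _
  rw [hrep h a s r, hzero (h ++ [s])]
  have h2 : F (h ++ [s]) = τ (F h) s := htau h q₀ s
  rw [h2]
end

section
/- Let R = ⟨A, S, R, D, γ⟩ be an RDP whose dynamics are represented by a finite transducer T = ⟨Q, q₀, S, τ, θ⟩, let M be its ideal MDP, and let ε > 0. If π' is a stationary policy for M that is ε-optimal for M (i.e., V^M_{π'}(q) ≥ V^M_*(q) − ε for every q ∈ Q), then the policy π defined by π(·|h) = π'(·|τ(q₀,h)) is ε-optimal for R (i.e., V_π(h) ≥ V_*(h) − ε for every history h ∈ S*). -/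
lemma collapse_sum {Q S R : Type*} [Fintype Q] [Fintype S] [Fintype R] [DecidableEq Q]
    (τq : S → Q) (f : S → R → ℝ) (c : Q → R → ℝ) :
    (∑ q' : Q, ∑ r : R, (∑ s : S, if τq s = q' then f s r else 0) * c q' r)
      = ∑ s : S, ∑ r : R, f s r * c (τq s) r := by
  classical
  calc (∑ q' : Q, ∑ r : R, (∑ s : S, if τq s = q' then f s r else 0) * c q' r)
      = ∑ q' : Q, ∑ r : R, ∑ s : S, if τq s = q' then f s r * c q' r else 0 := by
        refine Finset.sum_congr rfl fun q' _ => Finset.sum_congr rfl fun r _ => ?_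
        rw [Finset.sum_mul]
        exact Finset.sum_congr rfl fun s _ => by split <;> simp
    _ = ∑ q' : Q, ∑ s : S, ∑ r : R, if τq s = q' then f s r * c q' r else 0 :=
        Finset.sum_congr rfl fun q' _ => Finset.sum_comm
    _ = ∑ s : S, ∑ q' : Q, ∑ r : R, if τq s = q' then f s r * c q' r else 0 :=
        Finset.sum_comm
    _ = ∑ s : S, ∑ r : R, f s r * c (τq s) r := by
        refine Finset.sum_congr rfl fun s _ => ?_
        rw [Finset.sum_comm]
        exact Finset.sum_congr rfl fun r _ => by simp

lemma abs_sup'_sub_sup' {α : Type*} (t : Finset α) (ht : t.Nonempty) (f g : α → ℝ) (δ : ℝ)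
    (hfg : ∀ a ∈ t, |f a - g a| ≤ δ) : |t.sup' ht f - t.sup' ht g| ≤ δ := by
  rw [abs_sub_le_iff]
  constructor
  · rw [sub_le_iff_le_add]
    refine Finset.sup'_le _ _ fun a ha => ?_
    have h1 : f a - g a ≤ δ := (abs_le.mp (hfg a ha)).2
    have h2 : g a ≤ t.sup' ht g := Finset.le_sup' g ha
    linarith
  · rw [sub_le_iff_le_add]
    refine Finset.sup'_le _ _ fun a ha => ?_
    have h1 : g a - f a ≤ δ := by have := (abs_le.mp (hfg a ha)).1; linarith
    have h2 : f a ≤ t.sup' ht f := Finset.le_sup' f ha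
    linarith

lemma fix_eq {H : Type*} {γ : ℝ} (hγ0 : 0 ≤ γ) (hγ1 : γ < 1) (V W : H → ℝ)
    (C : ℝ) (hC : ∀ h, |V h - W h| ≤ C)
    (hstep : ∀ δ : ℝ, (∀ h, |V h - W h| ≤ δ) → ∀ h, |V h - W h| ≤ γ * δ) :
    ∀ h, V h = W h := by
  have key : ∀ n : ℕ, ∀ h, |V h - W h| ≤ γ ^ n * C := by
    intro n
    induction n with
    | zero => simpa using hC
    | succ n ih =>
      intro h
      calc |V h - W h| ≤ γ * (γ ^ n * C) := hstep _ ih h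
        _ = γ ^ (n+1) * C := by ring
  intro h
  have hten : Filter.Tendsto (fun n : ℕ => γ ^ n * C) Filter.atTop (nhds 0) := by
    simpa using (tendsto_pow_atTop_nhds_zero_of_lt_one hγ0 hγ1).mul_const C
  have h0 : |V h - W h| ≤ 0 := ge_of_tendsto' hten (fun n => key n h)
  have := abs_nonneg (V h - W h)
  have : |V h - W h| = 0 := le_antisymm h0 this
  have := abs_eq_zero.mp this
  linarith [sub_eq_zero.mp this]

/-- For an RDP whose dynamics are represented by a finite transducer
`⟨Q, q₀, S, τ, θ⟩` with ideal MDP `M`, if `π'` is a stationary policy for `M` that is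
ε-optimal for `M`, then the policy `π(·|h) = π'(·|τ(q₀,h))` is ε-optimal for the RDP. -/
theorem rdp_eps_optimal_policy_from_ideal_mdp
    {A S Q R : Type*} [Fintype A] [Nonempty A] [Fintype S] [Nonempty S]
    [Fintype Q] [Fintype R] [DecidableEq Q]
    -- rewards: finite set of non-negative reals
    (rval : R → ℝ) (hrval : ∀ r, 0 ≤ rval r)
    -- discount factor
    (γ : ℝ) (hγ0 : 0 < γ) (hγ1 : γ < 1)
    -- accuracy
    (ε : ℝ) (hε : 0 < ε)
    -- dynamics function: a probability distribution on S × R for every history and action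
    (D : List S → A → S → R → ℝ)
    (hD0 : ∀ h a s r, 0 ≤ D h a s r)
    (hD1 : ∀ h a, (∑ s : S, ∑ r : R, D h a s r) = 1)
    -- transducer representing the dynamics
    (q₀ : Q) (τ : Q → S → Q) (θ : Q → A → S → R → ℝ)
    (hrep : ∀ h a s r, D h a s r = θ (tauStar τ q₀ h) a s r)
    -- stationary policy π' on the ideal MDP
    (π' : Q → A → ℝ)
    (hπ'0 : ∀ q a, 0 ≤ π' q a) (hπ'1 : ∀ q, (∑ a : A, π' q a) = 1)
    -- the policy π on the RDP defined by π(·|h) = π'(·|τ(q₀,h))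
    (π : List S → A → ℝ)
    (hπ : ∀ h a, π h a = π' (tauStar τ q₀ h) a)
    -- optimal value of the RDP: the unique bounded solution of the Bellman equation
    (V : List S → ℝ)
    (hVbdd : ∃ C : ℝ, ∀ h, |V h| ≤ C)
    (hV : ∀ h : List S, V h = Finset.univ.sup' Finset.univ_nonempty
      (fun a : A => ∑ s : S, ∑ r : R, D h a s r * (rval r + γ * V (h ++ [s]))))
    -- value of π on the RDP: the unique bounded solution of its Bellman equation
    (Vπ : List S → ℝ)
    (hVπbdd : ∃ C : ℝ, ∀ h, |Vπ h| ≤ C)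
    (hVπ : ∀ h : List S, Vπ h = ∑ a : A, ∑ s : S, ∑ r : R,
      π h a * D h a s r * (rval r + γ * Vπ (h ++ [s])))
    -- optimal value of the ideal MDP, with D^M(q',r|q,a) = ∑_{s : τ(q,s) = q'} θ(q)(a,s,r)
    (VM : Q → ℝ)
    (hVM : ∀ q : Q, VM q = Finset.univ.sup' Finset.univ_nonempty
      (fun a : A => ∑ q' : Q, ∑ r : R,
        (∑ s : S, if τ q s = q' then θ q a s r else 0) * (rval r + γ * VM q')))
    -- value of π' on the ideal MDP
    (VMπ' : Q → ℝ)
    (hVMπ' : ∀ q : Q, VMπ' q = ∑ a : A, ∑ q' : Q, ∑ r : R,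
      π' q a * (∑ s : S, if τ q s = q' then θ q a s r else 0) * (rval r + γ * VMπ' q'))
    -- π' is ε-optimal for the ideal MDP
    (hεopt : ∀ q : Q, VMπ' q ≥ VM q - ε) :
    ∀ h : List S, Vπ h ≥ V h - ε := by
  classical
  set W : List S → ℝ := fun h => VM (tauStar τ q₀ h) with hWdef
  set Wπ : List S → ℝ := fun h => VMπ' (tauStar τ q₀ h) with hWπdef
  -- W satisfies the optimal Bellman equation of the RDP
  have hW : ∀ h, W h = Finset.univ.sup' Finset.univ_nonempty
      (fun a : A => ∑ s : S, ∑ r : R, D h a s r * (rval r + γ * W (h ++ [s]))) := by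
    intro h
    show VM (tauStar τ q₀ h) = _
    rw [hVM (tauStar τ q₀ h)]
    congr 1
    funext a
    rw [collapse_sum (τ (tauStar τ q₀ h)) (fun s r => θ (tauStar τ q₀ h) a s r)
      (fun q' r => rval r + γ * VM q')]
    refine Finset.sum_congr rfl fun s _ => Finset.sum_congr rfl fun r _ => ?_
    rw [hrep h a s r]
    have : tauStar τ q₀ (h ++ [s]) = τ (tauStar τ q₀ h) s := tauStar_append τ q₀ h s
    simp [W, this]
  -- Wπ satisfies the Bellman equation of π on the RDP
  have hWπ : ∀ h, Wπ h = ∑ a : A, ∑ s : S, ∑ r : R,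
      π h a * D h a s r * (rval r + γ * Wπ (h ++ [s])) := by
    intro h
    show VMπ' (tauStar τ q₀ h) = _
    rw [hVMπ' (tauStar τ q₀ h)]
    refine Finset.sum_congr rfl fun a _ => ?_
    have := collapse_sum (τ (tauStar τ q₀ h))
      (fun s r => π' (tauStar τ q₀ h) a * θ (tauStar τ q₀ h) a s r)
      (fun q' r => rval r + γ * VMπ' q')
    calc (∑ q' : Q, ∑ r : R, π' (tauStar τ q₀ h) a *
            (∑ s : S, if τ (tauStar τ q₀ h) s = q' then θ (tauStar τ q₀ h) a s r else 0) *
            (rval r + γ * VMπ' q'))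
        = ∑ q' : Q, ∑ r : R,
            (∑ s : S, if τ (tauStar τ q₀ h) s = q' then
              π' (tauStar τ q₀ h) a * θ (tauStar τ q₀ h) a s r else 0) *
            (rval r + γ * VMπ' q') := by
          refine Finset.sum_congr rfl fun q' _ => Finset.sum_congr rfl fun r _ => ?_
          rw [Finset.mul_sum]
          congr 1
          exact Finset.sum_congr rfl fun s _ => by split <;> simp
      _ = ∑ s : S, ∑ r : R, π' (tauStar τ q₀ h) a * θ (tauStar τ q₀ h) a s r *
            (rval r + γ * VMπ' (τ (tauStar τ q₀ h) s)) := this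
      _ = ∑ s : S, ∑ r : R, π h a * D h a s r * (rval r + γ * Wπ (h ++ [s])) := by
          refine Finset.sum_congr rfl fun s _ => Finset.sum_congr rfl fun r _ => ?_
          rw [hrep h a s r, hπ h a]
          have : tauStar τ q₀ (h ++ [s]) = τ (tauStar τ q₀ h) s := tauStar_append τ q₀ h s
          simp [Wπ, this]
  -- bounds
  obtain ⟨q1⟩ : Nonempty Q := ⟨q₀⟩
  have hQne : (Finset.univ : Finset Q).Nonempty := ⟨q1, Finset.mem_univ q1⟩
  have hWbdd : ∀ h, |W h| ≤ Finset.univ.sup' hQne (fun q => |VM q|) :=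
    fun h => Finset.le_sup' (fun q => |VM q|) (Finset.mem_univ _)
  have hWπbdd : ∀ h, |Wπ h| ≤ Finset.univ.sup' hQne (fun q => |VMπ' q|) :=
    fun h => Finset.le_sup' (fun q => |VMπ' q|) (Finset.mem_univ _)
  -- contraction step for sup'-type Bellman pairs
  have hγ0' : (0:ℝ) ≤ γ := le_of_lt hγ0
  -- V = W
  obtain ⟨C1, hC1⟩ := hVbdd
  have hVW : ∀ h, V h = W h := by
    have hbound : ∀ h, |V h - W h| ≤ C1 + Finset.univ.sup' hQne (fun q => |VM q|) := by
      intro h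
      have h1 := hC1 h; have h2 := hWbdd h
      have h3 : |V h - W h| ≤ |V h| + |W h| := abs_sub _ _
      linarith
    refine fix_eq hγ0' hγ1 V W _ hbound ?_
    intro δ hδ h
    rw [hV h, hW h]
    refine abs_sup'_sub_sup' _ _ _ _ (γ * δ) fun a _ => ?_
    have key : (∑ s : S, ∑ r : R, D h a s r * (rval r + γ * V (h ++ [s])))
        - (∑ s : S, ∑ r : R, D h a s r * (rval r + γ * W (h ++ [s])))
        = ∑ s : S, ∑ r : R, D h a s r * (γ * (V (h ++ [s]) - W (h ++ [s]))) := by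
      rw [← Finset.sum_sub_distrib]
      refine Finset.sum_congr rfl fun s _ => ?_
      rw [← Finset.sum_sub_distrib]
      exact Finset.sum_congr rfl fun r _ => by ring
    rw [key]
    calc |∑ s : S, ∑ r : R, D h a s r * (γ * (V (h ++ [s]) - W (h ++ [s])))|
        ≤ ∑ s : S, |∑ r : R, D h a s r * (γ * (V (h ++ [s]) - W (h ++ [s])))| :=
          Finset.abs_sum_le_sum_abs _ _
      _ ≤ ∑ s : S, ∑ r : R, |D h a s r * (γ * (V (h ++ [s]) - W (h ++ [s])))| :=
          Finset.sum_le_sum fun s _ => Finset.abs_sum_le_sum_abs _ _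
      _ ≤ ∑ s : S, ∑ r : R, D h a s r * (γ * δ) := by
          refine Finset.sum_le_sum fun s _ => Finset.sum_le_sum fun r _ => ?_
          rw [abs_mul, abs_of_nonneg (hD0 h a s r), abs_mul, abs_of_nonneg hγ0']
          exact mul_le_mul_of_nonneg_left
            (mul_le_mul_of_nonneg_left (hδ _) hγ0') (hD0 h a s r)
      _ = (∑ s : S, ∑ r : R, D h a s r) * (γ * δ) := by
          rw [Finset.sum_mul]; exact Finset.sum_congr rfl fun s _ => (Finset.sum_mul _ _ _).symm
      _ = γ * δ := by rw [hD1 h a, one_mul]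
  -- Vπ = Wπ
  obtain ⟨C2, hC2⟩ := hVπbdd
  have hπ0 : ∀ h a, 0 ≤ π h a := fun h a => (hπ h a) ▸ hπ'0 _ a
  have hπ1 : ∀ h, (∑ a : A, π h a) = 1 := fun h => by
    simp_rw [hπ h]; exact hπ'1 _
  have hVWπ : ∀ h, Vπ h = Wπ h := by
    have hbound : ∀ h, |Vπ h - Wπ h| ≤ C2 + Finset.univ.sup' hQne (fun q => |VMπ' q|) := by
      intro h
      have h1 := hC2 h; have h2 := hWπbdd h
      have h3 : |Vπ h - Wπ h| ≤ |Vπ h| + |Wπ h| := abs_sub _ _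
      linarith
    refine fix_eq hγ0' hγ1 Vπ Wπ _ hbound ?_
    intro δ hδ h
    rw [hVπ h, hWπ h]
    have key : (∑ a : A, ∑ s : S, ∑ r : R, π h a * D h a s r * (rval r + γ * Vπ (h ++ [s])))
        - (∑ a : A, ∑ s : S, ∑ r : R, π h a * D h a s r * (rval r + γ * Wπ (h ++ [s])))
        = ∑ a : A, ∑ s : S, ∑ r : R, π h a * D h a s r * (γ * (Vπ (h ++ [s]) - Wπ (h ++ [s]))) := by
      rw [← Finset.sum_sub_distrib]
      refine Finset.sum_congr rfl fun a _ => ?_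
      rw [← Finset.sum_sub_distrib]
      refine Finset.sum_congr rfl fun s _ => ?_
      rw [← Finset.sum_sub_distrib]
      exact Finset.sum_congr rfl fun r _ => by ring
    rw [key]
    calc |∑ a : A, ∑ s : S, ∑ r : R, π h a * D h a s r * (γ * (Vπ (h ++ [s]) - Wπ (h ++ [s])))|
        ≤ ∑ a : A, ∑ s : S, ∑ r : R,
            |π h a * D h a s r * (γ * (Vπ (h ++ [s]) - Wπ (h ++ [s])))| := by
          refine le_trans (Finset.abs_sum_le_sum_abs _ _) (Finset.sum_le_sum fun a _ => ?_)
          exact le_trans (Finset.abs_sum_le_sum_abs _ _)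
            (Finset.sum_le_sum fun s _ => Finset.abs_sum_le_sum_abs _ _)
      _ ≤ ∑ a : A, ∑ s : S, ∑ r : R, π h a * D h a s r * (γ * δ) := by
          refine Finset.sum_le_sum fun a _ => Finset.sum_le_sum fun s _ =>
            Finset.sum_le_sum fun r _ => ?_
          rw [abs_mul, abs_of_nonneg (mul_nonneg (hπ0 h a) (hD0 h a s r)), abs_mul,
            abs_of_nonneg hγ0']
          exact mul_le_mul_of_nonneg_left
            (mul_le_mul_of_nonneg_left (hδ _) hγ0')
            (mul_nonneg (hπ0 h a) (hD0 h a s r))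
      _ = (∑ a : A, π h a * (∑ s : S, ∑ r : R, D h a s r)) * (γ * δ) := by
          simp_rw [Finset.mul_sum, Finset.sum_mul]
      _ = γ * δ := by
          have : (∑ a : A, π h a * (∑ s : S, ∑ r : R, D h a s r)) = 1 := by
            simp_rw [hD1 h]; simpa using hπ1 h
          rw [this, one_mul]
  intro h
  rw [hVW h, hVWπ h]
  exact hεopt _
end

section
/- Let M and M̂ be two finite MDPs with the same actions A, rewards R (with maximum Rmax), and discount factor γ ∈ (0,1), and let α > 0. Suppose M̂ is an α-approximation of M via a bijection φ between their state sets. Then for every stationary policy π on M (with corresponding policy π̂(·|φ(s)) = π(·|s) on M̂), every state s, and every action a, it holds that |Q^M̂_{π̂}(φ(s), a) − Q^M_π(s, a)| ≤ α·Rmax/(1−γ)². -/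
lemma mdp_value_bounds {A S R : Type*} [Fintype A] [Fintype S] [Nonempty S] [Fintype R]
    (rval : R → ℝ) (hrval : ∀ r, 0 ≤ rval r)
    (Rmax : ℝ) (hRmax_le : ∀ r, rval r ≤ Rmax)
    (γ : ℝ) (hγ0 : 0 < γ) (hγ1 : γ < 1)
    (D : S → A → S → R → ℝ)
    (hD0 : ∀ s a s' r, 0 ≤ D s a s' r)
    (hD1 : ∀ s a, (∑ s' : S, ∑ r : R, D s a s' r) = 1)
    (π : S → A → ℝ)
    (hπ0 : ∀ s a, 0 ≤ π s a) (hπ1 : ∀ s, (∑ a : A, π s a) = 1)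
    (V : S → ℝ)
    (hV : ∀ s, V s = ∑ a : A, ∑ s' : S, ∑ r : R,
      π s a * D s a s' r * (rval r + γ * V s')) :
    ∀ s, 0 ≤ V s ∧ V s ≤ Rmax / (1 - γ) := by
  have h1γ : (0:ℝ) < 1 - γ := by linarith
  have hsum1 : ∀ s, (∑ a : A, ∑ s' : S, ∑ r : R, π s a * D s a s' r) = 1 := by
    intro s
    have : ∀ a : A, (∑ s' : S, ∑ r : R, π s a * D s a s' r)
        = π s a * ∑ s' : S, ∑ r : R, D s a s' r := by
      intro a; simp_rw [Finset.mul_sum]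
    simp_rw [this, hD1, mul_one, hπ1]
  -- lower bound
  obtain ⟨s₁, _, hmin⟩ := Finset.exists_min_image Finset.univ V Finset.univ_nonempty
  have hlow : 0 ≤ V s₁ := by
    have h1 : γ * V s₁ ≤ V s₁ := by
      conv_rhs => rw [hV s₁]
      have : γ * V s₁ = ∑ a : A, ∑ s' : S, ∑ r : R,
          π s₁ a * D s₁ a s' r * (γ * V s₁) := by
        simp_rw [← Finset.sum_mul, hsum1, one_mul]
      rw [this]
      refine Finset.sum_le_sum fun a _ => Finset.sum_le_sum fun s' _ =>
        Finset.sum_le_sum fun r _ => ?_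
      have hp : 0 ≤ π s₁ a * D s₁ a s' r := mul_nonneg (hπ0 _ _) (hD0 _ _ _ _)
      have : γ * V s₁ ≤ rval r + γ * V s' := by
        have := hrval r
        have := hmin s' (Finset.mem_univ s')
        nlinarith
      exact mul_le_mul_of_nonneg_left this hp
    nlinarith
  -- upper bound
  obtain ⟨s₀, _, hmax⟩ := Finset.exists_max_image Finset.univ V Finset.univ_nonempty
  have hup : V s₀ ≤ Rmax / (1 - γ) := by
    have h1 : V s₀ ≤ Rmax + γ * V s₀ := by
      conv_lhs => rw [hV s₀]
      have h2 : Rmax + γ * V s₀ = ∑ a : A, ∑ s' : S, ∑ r : R,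
          π s₀ a * D s₀ a s' r * (Rmax + γ * V s₀) := by
        simp_rw [← Finset.sum_mul, hsum1, one_mul]
      rw [h2]
      refine Finset.sum_le_sum fun a _ => Finset.sum_le_sum fun s' _ =>
        Finset.sum_le_sum fun r _ => ?_
      have hp : 0 ≤ π s₀ a * D s₀ a s' r := mul_nonneg (hπ0 _ _) (hD0 _ _ _ _)
      have : rval r + γ * V s' ≤ Rmax + γ * V s₀ := by
        have := hRmax_le r
        have := hmax s' (Finset.mem_univ s')
        nlinarith
      exact mul_le_mul_of_nonneg_left this hp
    rw [le_div_iff₀ h1γ]; nlinarith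
  intro s
  exact ⟨le_trans hlow (hmin s (Finset.mem_univ s)),
    le_trans (hmax s (Finset.mem_univ s)) hup⟩



/-- If `M̂` is an α-approximation of a finite MDP `M` via a bijection `φ`,
then for every stationary policy `π` on `M` (with corresponding policy `π̂` on `M̂`),
every state `s`, and every action `a`,
`|Q^M̂_{π̂}(φ(s), a) − Q^M_π(s, a)| ≤ α·Rmax/(1−γ)²`. -/
theorem approx_mdp_action_value_close
    {A S S' R : Type*} [Fintype A] [Nonempty A] [Fintype S] [Nonempty S] [Fintype S']
    [Fintype R]
    -- rewards: finite set of non-negative reals with maximum Rmax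
    (rval : R → ℝ) (hrval : ∀ r, 0 ≤ rval r)
    (Rmax : ℝ) (hRmax_le : ∀ r, rval r ≤ Rmax) (hRmax_mem : ∃ r, rval r = Rmax)
    -- discount factor
    (γ : ℝ) (hγ0 : 0 < γ) (hγ1 : γ < 1)
    -- approximation accuracy
    (α : ℝ) (hα : 0 < α)
    -- dynamics of M and M̂: probability distributions on states × rewards
    (D : S → A → S → R → ℝ)
    (hD0 : ∀ s a s' r, 0 ≤ D s a s' r)
    (hD1 : ∀ s a, (∑ s' : S, ∑ r : R, D s a s' r) = 1)
    (D' : S' → A → S' → R → ℝ)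
    (hD'0 : ∀ t a t' r, 0 ≤ D' t a t' r)
    (hD'1 : ∀ t a, (∑ t' : S', ∑ r : R, D' t a t' r) = 1)
    -- M̂ is an α-approximation of M via the bijection φ
    (φ : S ≃ S')
    (happrox : ∀ (s : S) (a : A),
      (∑ s' : S, ∑ r : R, |D s a s' r - D' (φ s) a (φ s') r|) ≤ α)
    -- stationary policy π on M and the corresponding policy π̂ on M̂
    (π : S → A → ℝ)
    (hπ0 : ∀ s a, 0 ≤ π s a) (hπ1 : ∀ s, (∑ a : A, π s a) = 1)
    (π' : S' → A → ℝ)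
    (hππ' : ∀ s a, π' (φ s) a = π s a)
    -- value of π on M: the unique solution of its Bellman equation
    (Vπ : S → ℝ)
    (hVπ : ∀ s, Vπ s = ∑ a : A, ∑ s' : S, ∑ r : R,
      π s a * D s a s' r * (rval r + γ * Vπ s'))
    -- value of π̂ on M̂: the unique solution of its Bellman equation
    (Vπ' : S' → ℝ)
    (hVπ' : ∀ t, Vπ' t = ∑ a : A, ∑ t' : S', ∑ r : R,
      π' t a * D' t a t' r * (rval r + γ * Vπ' t')) :
    ∀ (s : S) (a : A),
      |(∑ t : S', ∑ r : R, D' (φ s) a t r * (rval r + γ * Vπ' t))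
        - (∑ s' : S, ∑ r : R, D s a s' r * (rval r + γ * Vπ s'))|
        ≤ α * Rmax / (1 - γ) ^ 2 := by
  have h1γ : (0:ℝ) < 1 - γ := by linarith
  have hRmax0 : 0 ≤ Rmax := by obtain ⟨r, hr⟩ := hRmax_mem; exact hr ▸ hrval r
  have hS' : Nonempty S' := Nonempty.map φ inferInstance
  -- π' properties
  have hπ'0 : ∀ t a, 0 ≤ π' t a := by
    intro t a
    have := hππ' (φ.symm t) a
    rw [φ.apply_symm_apply] at this
    rw [this]; exact hπ0 _ _
  have hπ'1 : ∀ t, (∑ a : A, π' t a) = 1 := by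
    intro t
    have : ∀ a, π' t a = π (φ.symm t) a := by
      intro a
      have := hππ' (φ.symm t) a
      rwa [φ.apply_symm_apply] at this
    simp_rw [this, hπ1]
  have hVb := mdp_value_bounds rval hrval Rmax hRmax_le γ hγ0 hγ1 D hD0 hD1 π hπ0 hπ1 Vπ hVπ
  have hV'b := mdp_value_bounds rval hrval Rmax hRmax_le γ hγ0 hγ1 D' hD'0 hD'1 π' hπ'0 hπ'1 Vπ' hVπ'
  set C := Rmax / (1 - γ) with hC
  have hC0 : 0 ≤ C := div_nonneg hRmax0 h1γ.le
  -- Δ : max deviation of values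
  obtain ⟨s₂, _, hs₂⟩ := Finset.exists_max_image Finset.univ
    (fun s => |Vπ' (φ s) - Vπ s|) Finset.univ_nonempty
  set Δ := |Vπ' (φ s₂) - Vπ s₂| with hΔdef
  have hΔ0 : 0 ≤ Δ := abs_nonneg _
  have hΔmax : ∀ s : S, |Vπ' (φ s) - Vπ s| ≤ Δ := fun s => hs₂ s (Finset.mem_univ s)
  -- key bound on Q-differences
  have key : ∀ (s : S) (a : A),
      |(∑ t : S', ∑ r : R, D' (φ s) a t r * (rval r + γ * Vπ' t))
        - (∑ s' : S, ∑ r : R, D s a s' r * (rval r + γ * Vπ s'))|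
      ≤ α * C + γ * Δ := by
    intro s a
    have hre : (∑ t : S', ∑ r : R, D' (φ s) a t r * (rval r + γ * Vπ' t))
        = ∑ s' : S, ∑ r : R, D' (φ s) a (φ s') r * (rval r + γ * Vπ' (φ s')) :=
      (Equiv.sum_comp φ (fun t => ∑ r : R, D' (φ s) a t r * (rval r + γ * Vπ' t))).symm
    rw [hre]
    have split : (∑ s' : S, ∑ r : R, D' (φ s) a (φ s') r * (rval r + γ * Vπ' (φ s')))
        - (∑ s' : S, ∑ r : R, D s a s' r * (rval r + γ * Vπ s'))
        = (∑ s' : S, ∑ r : R,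
            (D' (φ s) a (φ s') r - D s a s' r) * (rval r + γ * Vπ' (φ s')))
        + (∑ s' : S, ∑ r : R, D s a s' r * (γ * (Vπ' (φ s') - Vπ s'))) := by
      rw [← Finset.sum_sub_distrib, ← Finset.sum_add_distrib]
      refine Finset.sum_congr rfl fun s' _ => ?_
      rw [← Finset.sum_sub_distrib, ← Finset.sum_add_distrib]
      exact Finset.sum_congr rfl fun r _ => by ring
    rw [split]
    have h1 : |∑ s' : S, ∑ r : R,
        (D' (φ s) a (φ s') r - D s a s' r) * (rval r + γ * Vπ' (φ s'))| ≤ α * C := by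
      calc |∑ s' : S, ∑ r : R,
          (D' (φ s) a (φ s') r - D s a s' r) * (rval r + γ * Vπ' (φ s'))|
          ≤ ∑ s' : S, ∑ r : R,
            |(D' (φ s) a (φ s') r - D s a s' r) * (rval r + γ * Vπ' (φ s'))| := by
            refine le_trans (Finset.abs_sum_le_sum_abs _ _)
              (Finset.sum_le_sum fun s' _ => Finset.abs_sum_le_sum_abs _ _)
        _ ≤ ∑ s' : S, ∑ r : R, |D s a s' r - D' (φ s) a (φ s') r| * C := by
            refine Finset.sum_le_sum fun s' _ => Finset.sum_le_sum fun r _ => ?_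
            rw [abs_mul, ← abs_sub_comm (D s a s' r)]
            refine mul_le_mul_of_nonneg_left ?_ (abs_nonneg _)
            have hv := hV'b (φ s')
            have hr0 := hrval r
            have hrM := hRmax_le r
            have hCeq : Rmax + γ * C = C := by
              rw [hC]; field_simp; ring
            rw [abs_le]
            constructor
            · nlinarith [hv.1]
            · nlinarith [hv.2]
        _ = (∑ s' : S, ∑ r : R, |D s a s' r - D' (φ s) a (φ s') r|) * C := by
            simp_rw [Finset.sum_mul]
        _ ≤ α * C := mul_le_mul_of_nonneg_right (happrox s a) hC0
    have h2 : |∑ s' : S, ∑ r : R, D s a s' r * (γ * (Vπ' (φ s') - Vπ s'))| ≤ γ * Δ := by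
      calc |∑ s' : S, ∑ r : R, D s a s' r * (γ * (Vπ' (φ s') - Vπ s'))|
          ≤ ∑ s' : S, ∑ r : R, |D s a s' r * (γ * (Vπ' (φ s') - Vπ s'))| := by
            refine le_trans (Finset.abs_sum_le_sum_abs _ _)
              (Finset.sum_le_sum fun s' _ => Finset.abs_sum_le_sum_abs _ _)
        _ ≤ ∑ s' : S, ∑ r : R, D s a s' r * (γ * Δ) := by
            refine Finset.sum_le_sum fun s' _ => Finset.sum_le_sum fun r _ => ?_
            rw [abs_mul, abs_of_nonneg (hD0 s a s' r), abs_mul, abs_of_nonneg hγ0.le]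
            exact mul_le_mul_of_nonneg_left
              (mul_le_mul_of_nonneg_left (hΔmax s') hγ0.le) (hD0 s a s' r)
        _ = γ * Δ := by simp_rw [← Finset.sum_mul, hD1, one_mul]
    calc _ ≤ _ := abs_add_le _ _
      _ ≤ α * C + γ * Δ := add_le_add h1 h2
  -- bound Δ
  have hΔle : Δ ≤ α * C + γ * Δ := by
    have hQform : Vπ' (φ s₂) - Vπ s₂ = ∑ a : A, π s₂ a *
        ((∑ t : S', ∑ r : R, D' (φ s₂) a t r * (rval r + γ * Vπ' t))
          - (∑ s' : S, ∑ r : R, D s₂ a s' r * (rval r + γ * Vπ s'))) := by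
      rw [hVπ' (φ s₂), hVπ s₂]
      rw [← Finset.sum_sub_distrib]
      refine Finset.sum_congr rfl fun a _ => ?_
      rw [mul_sub, hππ']
      congr 1
      · rw [Finset.mul_sum]
        refine Finset.sum_congr rfl fun t _ => ?_
        rw [Finset.mul_sum]
        exact Finset.sum_congr rfl fun r _ => by ring
      · rw [Finset.mul_sum]
        refine Finset.sum_congr rfl fun s' _ => ?_
        rw [Finset.mul_sum]
        exact Finset.sum_congr rfl fun r _ => by ring
    conv_lhs => rw [hΔdef, hQform]
    calc |∑ a : A, π s₂ a * _| ≤ ∑ a : A, |π s₂ a * _| := Finset.abs_sum_le_sum_abs _ _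
      _ ≤ ∑ a : A, π s₂ a * (α * C + γ * Δ) := by
          refine Finset.sum_le_sum fun a _ => ?_
          rw [abs_mul, abs_of_nonneg (hπ0 s₂ a)]
          exact mul_le_mul_of_nonneg_left (key s₂ a) (hπ0 s₂ a)
      _ = α * C + γ * Δ := by rw [← Finset.sum_mul, hπ1, one_mul]
  have hΔbound : Δ ≤ α * C / (1 - γ) := by
    rw [le_div_iff₀ h1γ]; nlinarith
  intro s a
  calc _ ≤ α * C + γ * Δ := key s a
    _ ≤ α * C + γ * (α * C / (1 - γ)) :=
        add_le_add_right (mul_le_mul_of_nonneg_left hΔbound hγ0.le) _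
    _ = α * Rmax / (1 - γ) ^ 2 := by rw [hC]; field_simp; ring
end

section
/- Let M' = ⟨A, S, R, D, γ⟩ be a finite MDP with maximum reward Rmax > 0, and let α be a real number with 0 < α < Rmax/(1−γ). Let Q₀ : S × A → ℝ be any initial estimate with 0 ≤ Q₀(s,a) ≤ Rmax/(1−γ) for all s, a, and define value iteration by Q_{i+1}(s,a) = Σ_{s',r} D(s',r|s,a)·(r + γ·max_b Q_i(s',b)). Then after i = ⌈(1/(1−γ))·ln(Rmax/(α·(1−γ)))⌉ iterations, the estimate satisfies |Q_i(s,a) − Q_*(s,a)| ≤ α for every state s and action a. -/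
/-- In a finite MDP with maximum reward `Rmax > 0`, for any `α` with
`0 < α < Rmax/(1−γ)`, running value iteration for
`⌈(1/(1−γ))·ln(Rmax/(α·(1−γ)))⌉` iterations from any initial estimate with values in
`[0, Rmax/(1−γ)]` yields estimates within `α` of the optimal action-value function. -/
theorem value_iteration_accuracy
    {A S R : Type*} [Fintype A] [Nonempty A] [Fintype S] [Nonempty S] [Fintype R]
    -- rewards: finite set of non-negative reals with maximum Rmax > 0
    (rval : R → ℝ) (hrval : ∀ r, 0 ≤ rval r)
    (Rmax : ℝ) (hRmax_pos : 0 < Rmax)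
    (hRmax_le : ∀ r, rval r ≤ Rmax) (hRmax_mem : ∃ r, rval r = Rmax)
    -- discount factor
    (γ : ℝ) (hγ0 : 0 < γ) (hγ1 : γ < 1)
    -- dynamics: a probability distribution on S × R for every s, a
    (D : S → A → S → R → ℝ)
    (hD0 : ∀ s a s' r, 0 ≤ D s a s' r)
    (hD1 : ∀ s a, (∑ s' : S, ∑ r : R, D s a s' r) = 1)
    -- required accuracy
    (α : ℝ) (hα0 : 0 < α) (hα1 : α < Rmax / (1 - γ))
    -- value iteration from an initial estimate with values in [0, Rmax/(1−γ)]
    (Qit : ℕ → S → A → ℝ)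
    (hQit0 : ∀ s a, 0 ≤ Qit 0 s a)
    (hQit0' : ∀ s a, Qit 0 s a ≤ Rmax / (1 - γ))
    (hQrec : ∀ i s a, Qit (i + 1) s a = ∑ s' : S, ∑ r : R,
      D s a s' r * (rval r + γ * Finset.univ.sup' Finset.univ_nonempty (fun b : A => Qit i s' b)))
    -- optimal value: the unique solution of the Bellman optimality equation
    (Vstar : S → ℝ)
    (hVstar : ∀ s, Vstar s = Finset.univ.sup' Finset.univ_nonempty
      (fun a : A => ∑ s' : S, ∑ r : R, D s a s' r * (rval r + γ * Vstar s')))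
    -- optimal action-value function
    (Qstar : S → A → ℝ)
    (hQstar : ∀ s a, Qstar s a = ∑ s' : S, ∑ r : R, D s a s' r * (rval r + γ * Vstar s')) :
    ∀ (s : S) (a : A),
      |Qit (⌈(1 / (1 - γ)) * Real.log (Rmax / (α * (1 - γ)))⌉₊) s a - Qstar s a| ≤ α := by

  intro s a
  have h1γ : (0:ℝ) < 1 - γ := by linarith
  set M : ℝ := Rmax / (1 - γ) with hMdef
  have hM : 0 < M := div_pos hRmax_pos h1γ
  have hMeq : Rmax + γ * M = M := by
    rw [hMdef]; field_simp; ring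
  -- summing a constant against D gives the constant
  have hsum : ∀ s a (c : ℝ), (∑ s' : S, ∑ r : R, D s a s' r * c) = c := by
    intro s a c
    have : (∑ s' : S, ∑ r : R, D s a s' r * c)
        = (∑ s' : S, ∑ r : R, D s a s' r) * c := by
      rw [Finset.sum_mul]
      exact Finset.sum_congr rfl fun s' _ => by rw [Finset.sum_mul]
    rw [this, hD1, one_mul]
  -- upper bound on Vstar
  have hVub : ∀ s, Vstar s ≤ M := by
    obtain ⟨s0, -, hs0⟩ := Finset.exists_max_image Finset.univ Vstar Finset.univ_nonempty
    have hbound : Vstar s0 ≤ Rmax + γ * Vstar s0 := by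
      conv_lhs => rw [hVstar s0]
      apply Finset.sup'_le
      intro a _
      calc (∑ s' : S, ∑ r : R, D s0 a s' r * (rval r + γ * Vstar s'))
          ≤ ∑ s' : S, ∑ r : R, D s0 a s' r * (Rmax + γ * Vstar s0) := by
            apply Finset.sum_le_sum; intro s' _
            apply Finset.sum_le_sum; intro r _
            apply mul_le_mul_of_nonneg_left _ (hD0 _ _ _ _)
            have := hRmax_le r
            have := hs0 s' (Finset.mem_univ s')
            nlinarith
        _ = Rmax + γ * Vstar s0 := hsum _ _ _
    have hs0M : Vstar s0 ≤ M := by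
      rw [hMdef, le_div_iff₀ h1γ]; nlinarith
    intro s
    exact le_trans (hs0 s (Finset.mem_univ s)) hs0M
  -- lower bound on Vstar
  have hVlb : ∀ s, 0 ≤ Vstar s := by
    obtain ⟨s1, -, hs1⟩ := Finset.exists_min_image Finset.univ Vstar Finset.univ_nonempty
    have hbound : γ * Vstar s1 ≤ Vstar s1 := by
      conv_rhs => rw [hVstar s1]
      obtain ⟨a0⟩ := (inferInstance : Nonempty A)
      refine le_trans ?_ (Finset.le_sup' _ (Finset.mem_univ a0))
      calc γ * Vstar s1 = ∑ s' : S, ∑ r : R, D s1 a0 s' r * (γ * Vstar s1) :=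
            (hsum _ _ _).symm
        _ ≤ ∑ s' : S, ∑ r : R, D s1 a0 s' r * (rval r + γ * Vstar s') := by
            apply Finset.sum_le_sum; intro s' _
            apply Finset.sum_le_sum; intro r _
            apply mul_le_mul_of_nonneg_left _ (hD0 _ _ _ _)
            have := hrval r
            have := hs1 s' (Finset.mem_univ s')
            nlinarith
    have hs1' : 0 ≤ Vstar s1 := by nlinarith
    intro s
    exact le_trans hs1' (hs1 s (Finset.mem_univ s))
  -- Qstar bounds
  have hQsb : ∀ s a, 0 ≤ Qstar s a ∧ Qstar s a ≤ M := by
    intro s a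
    rw [hQstar]
    constructor
    · apply Finset.sum_nonneg; intro s' _
      apply Finset.sum_nonneg; intro r _
      apply mul_nonneg (hD0 _ _ _ _)
      have := hrval r; have := hVlb s'; nlinarith
    · calc (∑ s' : S, ∑ r : R, D s a s' r * (rval r + γ * Vstar s'))
          ≤ ∑ s' : S, ∑ r : R, D s a s' r * (Rmax + γ * M) := by
            apply Finset.sum_le_sum; intro s' _
            apply Finset.sum_le_sum; intro r _
            apply mul_le_mul_of_nonneg_left _ (hD0 _ _ _ _)
            have := hRmax_le r; have := hVub s'; nlinarith
        _ = Rmax + γ * M := hsum _ _ _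
        _ = M := hMeq
  -- sup' difference bound
  have hsup : ∀ (f g : A → ℝ) (c : ℝ), (∀ b, |f b - g b| ≤ c) →
      |Finset.univ.sup' Finset.univ_nonempty f - Finset.univ.sup' Finset.univ_nonempty g| ≤ c := by
    intro f g c h
    rw [abs_sub_le_iff]
    constructor
    · rw [sub_le_iff_le_add]
      apply Finset.sup'_le; intro b _
      have h1 := (abs_sub_le_iff.1 (h b)).1
      have h2 := Finset.le_sup' g (Finset.mem_univ b)
      linarith
    · rw [sub_le_iff_le_add]
      apply Finset.sup'_le; intro b _
      have h1 := (abs_sub_le_iff.1 (h b)).2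
      have h2 := Finset.le_sup' f (Finset.mem_univ b)
      linarith
  -- Vstar as sup of Qstar
  have hVQ : ∀ s', Vstar s' = Finset.univ.sup' Finset.univ_nonempty (fun b : A => Qstar s' b) := by
    intro s'
    rw [hVstar s']
    congr 1
    funext b
    rw [hQstar]
  -- main contraction estimate
  have key : ∀ i s a, |Qit i s a - Qstar s a| ≤ γ ^ i * M := by
    intro i
    induction i with
    | zero =>
      intro s a
      rw [pow_zero, one_mul, abs_sub_le_iff]
      obtain ⟨h1, h2⟩ := hQsb s a
      exact ⟨by linarith [hQit0 s a, hQit0' s a], by linarith [hQit0 s a, hQit0' s a]⟩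
    | succ i ih =>
      intro s a
      have hdiff : Qit (i + 1) s a - Qstar s a = ∑ s' : S, ∑ r : R,
          D s a s' r * (γ * (Finset.univ.sup' Finset.univ_nonempty (fun b : A => Qit i s' b)
            - Vstar s')) := by
        rw [hQrec, hQstar, ← Finset.sum_sub_distrib]
        apply Finset.sum_congr rfl; intro s' _
        rw [← Finset.sum_sub_distrib]
        apply Finset.sum_congr rfl; intro r _
        ring
      rw [hdiff]
      calc |∑ s' : S, ∑ r : R, D s a s' r *
              (γ * (Finset.univ.sup' Finset.univ_nonempty (fun b : A => Qit i s' b) - Vstar s'))|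
          ≤ ∑ s' : S, |∑ r : R, D s a s' r *
              (γ * (Finset.univ.sup' Finset.univ_nonempty (fun b : A => Qit i s' b) - Vstar s'))| :=
            Finset.abs_sum_le_sum_abs _ _
        _ ≤ ∑ s' : S, ∑ r : R, |D s a s' r *
              (γ * (Finset.univ.sup' Finset.univ_nonempty (fun b : A => Qit i s' b) - Vstar s'))| := by
            apply Finset.sum_le_sum; intro s' _
            exact Finset.abs_sum_le_sum_abs _ _
        _ ≤ ∑ s' : S, ∑ r : R, D s a s' r * (γ * (γ ^ i * M)) := by
            apply Finset.sum_le_sum; intro s' _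
            apply Finset.sum_le_sum; intro r _
            rw [abs_mul, abs_mul, abs_of_nonneg (hD0 s a s' r), abs_of_pos hγ0]
            apply mul_le_mul_of_nonneg_left _ (hD0 _ _ _ _)
            apply mul_le_mul_of_nonneg_left _ (le_of_lt hγ0)
            rw [hVQ s']
            exact hsup _ _ _ (fun b => ih s' b)
        _ = γ * (γ ^ i * M) := hsum _ _ _
        _ = γ ^ (i + 1) * M := by ring
  -- final analytic estimate
  set N : ℕ := ⌈(1 / (1 - γ)) * Real.log (Rmax / (α * (1 - γ)))⌉₊ with hNdef
  have hx0 : 0 < Rmax / (α * (1 - γ)) := by positivity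
  have hxα : α * (1 - γ) < Rmax := by
    rw [hMdef, lt_div_iff₀ h1γ] at hα1; linarith
  have hlogN : Real.log (Rmax / (α * (1 - γ))) ≤ (N : ℝ) * (1 - γ) := by
    have h1 := Nat.le_ceil ((1 / (1 - γ)) * Real.log (Rmax / (α * (1 - γ))))
    rw [← hNdef] at h1
    rw [div_mul_eq_mul_div, one_mul, div_le_iff₀ h1γ] at h1
    linarith
  have hpow : γ ^ N ≤ α * (1 - γ) / Rmax := by
    have hγexp : γ ^ N = Real.exp ((N : ℝ) * Real.log γ) := by
      rw [Real.exp_nat_mul, Real.exp_log hγ0]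
    have hlogγ : Real.log γ ≤ γ - 1 := Real.log_le_sub_one_of_pos hγ0
    have h2 : (N : ℝ) * Real.log γ ≤ -(Real.log (Rmax / (α * (1 - γ)))) := by
      have h3 : (N : ℝ) * Real.log γ ≤ (N : ℝ) * (γ - 1) :=
        mul_le_mul_of_nonneg_left hlogγ (Nat.cast_nonneg N)
      have h4 : (N : ℝ) * (γ - 1) = -((N : ℝ) * (1 - γ)) := by ring
      linarith
    calc γ ^ N = Real.exp ((N : ℝ) * Real.log γ) := hγexp
      _ ≤ Real.exp (-(Real.log (Rmax / (α * (1 - γ))))) := Real.exp_le_exp.2 h2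
      _ = α * (1 - γ) / Rmax := by
          rw [Real.exp_neg, Real.exp_log hx0, inv_div]
  have hfin : γ ^ N * M ≤ α := by
    calc γ ^ N * M ≤ (α * (1 - γ) / Rmax) * M :=
          mul_le_mul_of_nonneg_right hpow (le_of_lt hM)
      _ = α := by rw [hMdef]; field_simp
  exact le_trans (key N s a) hfin
end

section
/- Let M be a finite MDP with maximum reward Rmax > 0 and discount γ ∈ (0,1), and let ε be a real with 0 < ε ≤ Rmax/(1−γ). Set ε_M = (1−γ)³·ε/(3·Rmax) and m = ⌈(1/(1−γ))·ln(2·Rmax/(ε·(1−γ)²))⌉. Suppose M̂ is an ε_M-approximation of M via a bijection φ. Let Q_m be obtained by m iterations of value iteration on M̂ starting from the zero initial estimate, and let π be the stationary policy on M defined greedily by π(s) ∈ argmax_a Q_m(φ(s), a). Then π is ε-optimal for M, i.e., V^M_π(s) ≥ V^M_*(s) − ε for every state s. -/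
open Finset

lemma mdp_sum_weighted_le {T R : Type*} [Fintype T] [Fintype R]
    (q : T → R → ℝ) (hq0 : ∀ t r, 0 ≤ q t r) (hq1 : (∑ t, ∑ r, q t r) = 1)
    (g : T → R → ℝ) (c : ℝ) (h : ∀ t r, g t r ≤ c) :
    (∑ t, ∑ r, q t r * g t r) ≤ c := by
  calc (∑ t, ∑ r, q t r * g t r) ≤ ∑ t, ∑ r, q t r * c := by
        apply Finset.sum_le_sum; intro t _; apply Finset.sum_le_sum; intro r _
        exact mul_le_mul_of_nonneg_left (h t r) (hq0 t r)
    _ = (∑ t, ∑ r, q t r) * c := by simp only [← Finset.sum_mul]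
    _ = c := by rw [hq1, one_mul]

lemma mdp_sum_weighted_ge {T R : Type*} [Fintype T] [Fintype R]
    (q : T → R → ℝ) (hq0 : ∀ t r, 0 ≤ q t r) (hq1 : (∑ t, ∑ r, q t r) = 1)
    (g : T → R → ℝ) (c : ℝ) (h : ∀ t r, c ≤ g t r) :
    c ≤ (∑ t, ∑ r, q t r * g t r) := by
  calc c = (∑ t, ∑ r, q t r) * c := by rw [hq1, one_mul]
    _ = ∑ t, ∑ r, q t r * c := by simp only [← Finset.sum_mul]
    _ ≤ ∑ t, ∑ r, q t r * g t r := by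
        apply Finset.sum_le_sum; intro t _; apply Finset.sum_le_sum; intro r _
        exact mul_le_mul_of_nonneg_left (h t r) (hq0 t r)

lemma mdp_bellman_op_sub {T R : Type*} [Fintype T] [Fintype R]
    (q : T → R → ℝ) (rv : R → ℝ) (γ : ℝ) (f g : T → ℝ) :
    (∑ t, ∑ r, q t r * (rv r + γ * f t)) - (∑ t, ∑ r, q t r * (rv r + γ * g t))
      = ∑ t, ∑ r, q t r * (γ * (f t - g t)) := by
  simp only [← Finset.sum_sub_distrib]
  exact Finset.sum_congr rfl fun t _ => Finset.sum_congr rfl fun r _ => by ring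

lemma mdp_bellman_op_diff {T R : Type*} [Fintype T] [Fintype R]
    (q : T → R → ℝ) (hq0 : ∀ t r, 0 ≤ q t r) (hq1 : (∑ t, ∑ r, q t r) = 1)
    (rv : R → ℝ) (γ : ℝ) (hγ : 0 ≤ γ) (f g : T → ℝ) (c : ℝ) (hc : ∀ t, |f t - g t| ≤ c) :
    |(∑ t, ∑ r, q t r * (rv r + γ * f t)) - (∑ t, ∑ r, q t r * (rv r + γ * g t))| ≤ γ * c := by
  rw [mdp_bellman_op_sub]
  calc |∑ t, ∑ r, q t r * (γ * (f t - g t))| ≤ ∑ t, |∑ r, q t r * (γ * (f t - g t))| :=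
        Finset.abs_sum_le_sum_abs _ _
    _ ≤ ∑ t, ∑ r, |q t r * (γ * (f t - g t))| := by
        apply Finset.sum_le_sum; intro t _; exact Finset.abs_sum_le_sum_abs _ _
    _ = ∑ t, ∑ r, q t r * |γ * (f t - g t)| := by
        apply Finset.sum_congr rfl; intro t _; apply Finset.sum_congr rfl; intro r _
        rw [abs_mul, abs_of_nonneg (hq0 t r)]
    _ ≤ γ * c := by
        apply mdp_sum_weighted_le q hq0 hq1 _ _ ?_
        intro t r
        rw [abs_mul, abs_of_nonneg hγ]
        exact mul_le_mul_of_nonneg_left (hc t) hγ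

lemma mdp_sim_step_bound {T R : Type*} [Fintype T] [Fintype R]
    (p q : T → R → ℝ) (hq0 : ∀ t r, 0 ≤ q t r)
    (hp1 : (∑ t, ∑ r, p t r) = 1) (hq1 : (∑ t, ∑ r, q t r) = 1)
    (w z : T → R → ℝ) (M c α : ℝ) (hM : 0 ≤ M)
    (hw : ∀ t r, |w t r - M / 2| ≤ M / 2)
    (hz : ∀ t r, |w t r - z t r| ≤ c)
    (hα : (∑ t, ∑ r, |p t r - q t r|) ≤ α) :
    |(∑ t, ∑ r, p t r * w t r) - (∑ t, ∑ r, q t r * z t r)| ≤ α * (M / 2) + c := by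
  have key : (∑ t, ∑ r, p t r * w t r) - (∑ t, ∑ r, q t r * z t r)
      = (∑ t, ∑ r, (p t r - q t r) * (w t r - M / 2))
        + (M / 2) * ((∑ t, ∑ r, p t r) - (∑ t, ∑ r, q t r))
        + (∑ t, ∑ r, q t r * (w t r - z t r)) := by
    simp only [← Finset.sum_sub_distrib, Finset.mul_sum, ← Finset.sum_add_distrib]
    exact Finset.sum_congr rfl fun t _ => Finset.sum_congr rfl fun r _ => by ring
  rw [key, hp1, hq1, sub_self, mul_zero, add_zero]
  have h1 : |∑ t, ∑ r, (p t r - q t r) * (w t r - M / 2)| ≤ α * (M / 2) := by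
    calc |∑ t, ∑ r, (p t r - q t r) * (w t r - M / 2)|
        ≤ ∑ t, |∑ r, (p t r - q t r) * (w t r - M / 2)| := Finset.abs_sum_le_sum_abs _ _
      _ ≤ ∑ t, ∑ r, |(p t r - q t r) * (w t r - M / 2)| := by
          apply Finset.sum_le_sum; intro t _; exact Finset.abs_sum_le_sum_abs _ _
      _ ≤ ∑ t, ∑ r, |p t r - q t r| * (M / 2) := by
          apply Finset.sum_le_sum; intro t _; apply Finset.sum_le_sum; intro r _
          rw [abs_mul]
          exact mul_le_mul_of_nonneg_left (hw t r) (abs_nonneg _)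
      _ = (∑ t, ∑ r, |p t r - q t r|) * (M / 2) := by simp only [← Finset.sum_mul]
      _ ≤ α * (M / 2) := mul_le_mul_of_nonneg_right hα (by linarith)
  have h2 : |∑ t, ∑ r, q t r * (w t r - z t r)| ≤ c := by
    calc |∑ t, ∑ r, q t r * (w t r - z t r)|
        ≤ ∑ t, |∑ r, q t r * (w t r - z t r)| := Finset.abs_sum_le_sum_abs _ _
      _ ≤ ∑ t, ∑ r, |q t r * (w t r - z t r)| := by
          apply Finset.sum_le_sum; intro t _; exact Finset.abs_sum_le_sum_abs _ _
      _ = ∑ t, ∑ r, q t r * |w t r - z t r| := by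
          apply Finset.sum_congr rfl; intro t _; apply Finset.sum_congr rfl; intro r _
          rw [abs_mul, abs_of_nonneg (hq0 t r)]
      _ ≤ c := mdp_sum_weighted_le q hq0 hq1 _ _ hz
  calc |_ + _| ≤ _ := abs_add_le _ _
    _ ≤ α * (M / 2) + c := add_le_add h1 h2

lemma mdp_sup'_abs_sub_le {A : Type*} [Fintype A] [Nonempty A] (f g : A → ℝ) (c : ℝ)
    (h : ∀ a, |f a - g a| ≤ c) :
    |Finset.univ.sup' Finset.univ_nonempty f - Finset.univ.sup' Finset.univ_nonempty g| ≤ c := by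
  rw [abs_sub_le_iff]
  constructor
  · rw [sub_le_iff_le_add]
    apply Finset.sup'_le
    intro a _
    have h1 := (abs_sub_le_iff.1 (h a)).1
    have h2 := Finset.le_sup' g (Finset.mem_univ a)
    linarith
  · rw [sub_le_iff_le_add]
    apply Finset.sup'_le
    intro a _
    have h1 := (abs_sub_le_iff.1 (h a)).2
    have h2 := Finset.le_sup' f (Finset.mem_univ a)
    linarith

lemma mdp_bellman_bound {T R : Type*} [Fintype T] [Fintype R]
    (rval : R → ℝ) (hr0 : ∀ r, 0 ≤ rval r) (Rmax : ℝ) (hR : ∀ r, rval r ≤ Rmax)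
    (γ : ℝ) (hγ0 : 0 ≤ γ) (hγ1 : γ < 1) (V : T → ℝ)
    (hex : ∀ t, ∃ p : T → R → ℝ, (∀ t' r, 0 ≤ p t' r) ∧ ((∑ t', ∑ r, p t' r) = 1) ∧
      V t = ∑ t', ∑ r, p t' r * (rval r + γ * V t')) :
    ∀ t, 0 ≤ V t ∧ V t ≤ Rmax / (1 - γ) := by
  intro t
  have hne : (Finset.univ : Finset T).Nonempty := ⟨t, Finset.mem_univ t⟩
  obtain ⟨t0, _, ht0⟩ := Finset.exists_max_image Finset.univ V hne
  obtain ⟨t1, _, ht1⟩ := Finset.exists_min_image Finset.univ V hne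
  have hβ : (0:ℝ) < 1 - γ := by linarith
  obtain ⟨p, hp0, hp1, hpe⟩ := hex t0
  have hub0 : V t0 ≤ Rmax / (1 - γ) := by
    have h0 : V t0 ≤ Rmax + γ * V t0 := by
      rw [hpe]
      apply mdp_sum_weighted_le p hp0 hp1
      intro t' r
      have := ht0 t' (Finset.mem_univ t')
      have := hR r
      nlinarith
    rw [le_div_iff₀ hβ]
    nlinarith
  obtain ⟨p1, hp10, hp11, hp1e⟩ := hex t1
  have hlb1 : 0 ≤ V t1 := by
    have h1 : γ * V t1 ≤ V t1 := by
      nth_rewrite 2 [hp1e]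
      apply mdp_sum_weighted_ge p1 hp10 hp11
      intro t' r
      have := ht1 t' (Finset.mem_univ t')
      have := hr0 r
      nlinarith
    nlinarith
  exact ⟨le_trans hlb1 (ht1 t (Finset.mem_univ t)), le_trans (ht0 t (Finset.mem_univ t)) hub0⟩

lemma mdp_exists_fixedPoint {T : Type*} [Fintype T] [Nonempty T]
    (F : (T → ℝ) → (T → ℝ)) (γ : ℝ) (hγ0 : 0 ≤ γ) (hγ1 : γ < 1)
    (hF : ∀ f g t, |F f t - F g t| ≤ γ * dist f g) :
    ∃ V : T → ℝ, F V = V := by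
  have hc : ContractingWith ⟨γ, hγ0⟩ F := by
    constructor
    · exact_mod_cast hγ1
    · apply LipschitzWith.of_dist_le_mul
      intro f g
      have hnn : (0:ℝ) ≤ γ * dist f g := mul_nonneg hγ0 dist_nonneg
      change dist (F f) (F g) ≤ γ * dist f g
      apply (dist_pi_le_iff hnn).2
      intro t
      rw [Real.dist_eq]
      exact hF f g t
  exact ⟨_, hc.fixedPoint_isFixedPt⟩

lemma mdp_cubic_le_neg_log_one_sub {x : ℝ} (h0 : 0 ≤ x) (h1 : x < 1) :
    x + x ^ 2 / 2 + x ^ 3 / 3 ≤ -Real.log (1 - x) := by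
  rcases eq_or_lt_of_le h0 with h | h
  · simp [← h]
  set f : ℝ → ℝ := fun t => -Real.log (1 - t) - (t + t ^ 2 / 2 + t ^ 3 / 3) with hf
  have hder : ∀ t ∈ Set.Icc (0:ℝ) x, HasDerivAt f ((1 - t)⁻¹ - (1 + t + t ^ 2)) t := by
    intro t ht
    have hlt : t < 1 := lt_of_le_of_lt ht.2 h1
    have hne : (1:ℝ) - t ≠ 0 := by intro hh; linarith [sub_eq_zero.1 hh]
    have h2 : HasDerivAt (fun t : ℝ => 1 - t) (-1) t := by
      simpa using (hasDerivAt_id t).const_sub (1:ℝ)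
    have hlog : HasDerivAt (fun t : ℝ => Real.log (1 - t)) ((1 - t)⁻¹ * -1) t :=
      (Real.hasDerivAt_log hne).comp t h2
    have hpoly : HasDerivAt (fun t : ℝ => t + t ^ 2 / 2 + t ^ 3 / 3)
        (1 + (↑2 * t ^ 1) / 2 + (↑3 * t ^ 2) / 3) t :=
      ((hasDerivAt_id t).add ((hasDerivAt_pow 2 t).div_const 2)).add
        ((hasDerivAt_pow 3 t).div_const 3)
    have := hlog.neg.sub hpoly
    refine this.congr_deriv ?_
    push_cast
    ring
  have hmono : MonotoneOn f (Set.Icc 0 x) := by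
    apply monotoneOn_of_deriv_nonneg (convex_Icc 0 x)
    · intro t ht
      exact (hder t ht).differentiableAt.continuousAt.continuousWithinAt
    · intro t ht
      rw [interior_Icc] at ht
      exact ((hder t (Set.mem_Icc_of_Ioo ht)).differentiableAt).differentiableWithinAt
    · intro t ht
      rw [interior_Icc] at ht
      rw [(hder t (Set.mem_Icc_of_Ioo ht)).deriv]
      have h1t : 0 < 1 - t := by linarith [lt_of_lt_of_le ht.2 (le_of_lt h1)]
      rw [sub_nonneg, ← one_div, le_div_iff₀ h1t]
      nlinarith [pow_nonneg (le_of_lt ht.1) 3]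
  have hfx := hmono (Set.left_mem_Icc.2 h0) (Set.right_mem_Icc.2 h0) h0
  have hf0 : f 0 = 0 := by simp [hf]
  rw [hf0] at hfx
  simp only [hf] at hfx
  linarith

lemma mdp_poly_ineq (b : ℝ) (hb0 : 0 < b) (hb1 : b < 1) :
    b * (b / (3 - b)) ≤ Real.log 2 * (b ^ 2 / 2 + b ^ 3 / 3) := by
  have hlog2 : (0.6931471803 : ℝ) < Real.log 2 := Real.log_two_gt_d9
  rw [mul_div_assoc', div_le_iff₀ (by linarith)]
  have hb43 : b ^ 4 ≤ b ^ 3 := by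
    nlinarith [mul_nonneg (pow_nonneg hb0.le 3) (sub_nonneg.2 hb1.le)]
  have hb30 : (0:ℝ) ≤ b ^ 3 := by positivity
  have hd : 0 ≤ b ^ 3 / 2 - b ^ 4 / 3 := by linarith
  have hb20 : (0:ℝ) ≤ b ^ 2 := by positivity
  nlinarith [hlog2, hd, hb20]

set_option maxHeartbeats 1000000 in


/-- Let `M` be a finite MDP with maximum reward `Rmax > 0` and discount
`γ ∈ (0,1)`, and let `0 < ε ≤ Rmax/(1−γ)`. If `M̂` is an `ε_M`-approximation of `M` (with
`ε_M = (1−γ)³·ε/(3·Rmax)`) via a bijection `φ`, `Q_m` is obtained by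
`m = ⌈(1/(1−γ))·ln(2·Rmax/(ε·(1−γ)²))⌉` iterations of value iteration on `M̂` starting
from the zero estimate, and `π` is greedy with respect to `Q_m ∘ φ`, then `π` is
ε-optimal for `M`. -/
theorem greedy_policy_from_approx_mdp_eps_optimal
    {A S S' R : Type*} [Fintype A] [Nonempty A] [Fintype S] [Nonempty S] [Fintype S']
    [Fintype R]
    -- rewards: finite set of non-negative reals with maximum Rmax > 0
    (rval : R → ℝ) (hrval : ∀ r, 0 ≤ rval r)
    (Rmax : ℝ) (hRmax_pos : 0 < Rmax)
    (hRmax_le : ∀ r, rval r ≤ Rmax) (hRmax_mem : ∃ r, rval r = Rmax)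
    -- discount factor
    (γ : ℝ) (hγ0 : 0 < γ) (hγ1 : γ < 1)
    -- required accuracy
    (ε : ℝ) (hε0 : 0 < ε) (hε1 : ε ≤ Rmax / (1 - γ))
    -- dynamics of M and of M̂
    (D : S → A → S → R → ℝ)
    (hD0 : ∀ s a s' r, 0 ≤ D s a s' r)
    (hD1 : ∀ s a, (∑ s' : S, ∑ r : R, D s a s' r) = 1)
    (D' : S' → A → S' → R → ℝ)
    (hD'0 : ∀ t a t' r, 0 ≤ D' t a t' r)
    (hD'1 : ∀ t a, (∑ t' : S', ∑ r : R, D' t a t' r) = 1)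
    -- M̂ is an ε_M-approximation of M via the bijection φ, ε_M = (1−γ)³·ε/(3·Rmax)
    (φ : S ≃ S')
    (happrox : ∀ (s : S) (a : A),
      (∑ s' : S, ∑ r : R, |D s a s' r - D' (φ s) a (φ s') r|)
        ≤ (1 - γ) ^ 3 * ε / (3 * Rmax))
    -- value iteration on M̂ starting from the zero initial estimate
    (Qit : ℕ → S' → A → ℝ)
    (hQit0 : ∀ t a, Qit 0 t a = 0)
    (hQrec : ∀ i t a, Qit (i + 1) t a = ∑ t' : S', ∑ r : R,
      D' t a t' r * (rval r + γ * Finset.univ.sup' Finset.univ_nonempty (fun b : A => Qit i t' b)))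
    -- the greedy stationary policy π on M with respect to Q_m(φ(·), ·),
    -- where m = ⌈(1/(1−γ))·ln(2·Rmax/(ε·(1−γ)²))⌉
    (π : S → A)
    (hgreedy : ∀ (s : S) (a : A),
      Qit (⌈(1 / (1 - γ)) * Real.log (2 * Rmax / (ε * (1 - γ) ^ 2))⌉₊) (φ s) a
        ≤ Qit (⌈(1 / (1 - γ)) * Real.log (2 * Rmax / (ε * (1 - γ) ^ 2))⌉₊) (φ s) (π s))
    -- value of π on M: the unique solution of its Bellman equation
    (Vπ : S → ℝ)
    (hVπ : ∀ s, Vπ s = ∑ s' : S, ∑ r : R, D s (π s) s' r * (rval r + γ * Vπ s'))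
    -- optimal value of M
    (Vstar : S → ℝ)
    (hVstar : ∀ s, Vstar s = Finset.univ.sup' Finset.univ_nonempty
      (fun a : A => ∑ s' : S, ∑ r : R, D s a s' r * (rval r + γ * Vstar s'))) :
    ∀ s : S, Vπ s ≥ Vstar s - ε := by
  have hS' : Nonempty S' := ⟨φ (Classical.arbitrary S)⟩
  -- basic abbreviations
  set β : ℝ := 1 - γ with hβdef
  have hβ0 : 0 < β := by simp only [hβdef]; linarith
  have hβ1 : β < 1 := by simp only [hβdef]; linarith
  set εM : ℝ := β ^ 3 * ε / (3 * Rmax) with hεMdef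
  set m : ℕ := ⌈(1 / β) * Real.log (2 * Rmax / (ε * β ^ 2))⌉₊ with hmdef
  set Vmax : ℝ := Rmax / β with hVmaxdef
  have hVmax0 : 0 < Vmax := by positivity
  have hRV : Rmax + γ * Vmax = Vmax := by
    rw [hVmaxdef, eq_div_iff hβ0.ne', add_mul, mul_assoc, div_mul_cancel₀ _ hβ0.ne', hβdef]
    ring
  -- bounds on Vstar and Vπ
  have hVstar_b : ∀ s, 0 ≤ Vstar s ∧ Vstar s ≤ Vmax := by
    apply mdp_bellman_bound rval hrval Rmax hRmax_le γ hγ0.le hγ1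
    intro s
    obtain ⟨a, _, ha⟩ := Finset.exists_mem_eq_sup' Finset.univ_nonempty
      (fun a : A => ∑ s' : S, ∑ r : R, D s a s' r * (rval r + γ * Vstar s'))
    exact ⟨D s a, fun t' r => hD0 s a t' r, hD1 s a, by rw [hVstar s, ha]⟩
  have hVπ_b : ∀ s, 0 ≤ Vπ s ∧ Vπ s ≤ Vmax := by
    apply mdp_bellman_bound rval hrval Rmax hRmax_le γ hγ0.le hγ1
    intro s
    exact ⟨D s (π s), fun t' r => hD0 s (π s) t' r, hD1 s (π s), hVπ s⟩
  -- fixed points on M̂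
  obtain ⟨Vhp, hVhp_fix⟩ := mdp_exists_fixedPoint
    (fun f t => ∑ t' : S', ∑ r : R, D' t (π (φ.symm t)) t' r * (rval r + γ * f t'))
    γ hγ0.le hγ1 (by
      intro f g t
      exact mdp_bellman_op_diff (D' t (π (φ.symm t))) (hD'0 t _) (hD'1 t _) rval γ hγ0.le f g
        (dist f g) (fun t' => by rw [← Real.dist_eq]; exact dist_le_pi_dist f g t'))
  obtain ⟨Vhs, hVhs_fix⟩ := mdp_exists_fixedPoint
    (fun f t => Finset.univ.sup' Finset.univ_nonempty
      (fun a : A => ∑ t' : S', ∑ r : R, D' t a t' r * (rval r + γ * f t')))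
    γ hγ0.le hγ1 (by
      intro f g t
      apply mdp_sup'_abs_sub_le
      intro a
      exact mdp_bellman_op_diff (D' t a) (hD'0 t a) (hD'1 t a) rval γ hγ0.le f g
        (dist f g) (fun t' => by rw [← Real.dist_eq]; exact dist_le_pi_dist f g t'))
  have hVhp_eq : ∀ t, Vhp t = ∑ t' : S', ∑ r : R,
      D' t (π (φ.symm t)) t' r * (rval r + γ * Vhp t') := fun t => (congrFun hVhp_fix t).symm
  have hVhs_eq : ∀ t, Vhs t = Finset.univ.sup' Finset.univ_nonempty
      (fun a : A => ∑ t' : S', ∑ r : R, D' t a t' r * (rval r + γ * Vhs t')) :=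
    fun t => (congrFun hVhs_fix t).symm
  have hVhp_b : ∀ t, 0 ≤ Vhp t ∧ Vhp t ≤ Vmax := by
    apply mdp_bellman_bound rval hrval Rmax hRmax_le γ hγ0.le hγ1
    intro t
    exact ⟨D' t (π (φ.symm t)), fun t' r => hD'0 t _ t' r, hD'1 t _, hVhp_eq t⟩
  have hVhs_b : ∀ t, 0 ≤ Vhs t ∧ Vhs t ≤ Vmax := by
    apply mdp_bellman_bound rval hrval Rmax hRmax_le γ hγ0.le hγ1
    intro t
    obtain ⟨a, _, ha⟩ := Finset.exists_mem_eq_sup' Finset.univ_nonempty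
      (fun a : A => ∑ t' : S', ∑ r : R, D' t a t' r * (rval r + γ * Vhs t'))
    exact ⟨D' t a, fun t' r => hD'0 t a t' r, hD'1 t a, by rw [hVhs_eq t, ha]⟩
  -- the optimal Q-function on M̂
  set Qhat : S' → A → ℝ :=
    fun t a => ∑ t' : S', ∑ r : R, D' t a t' r * (rval r + γ * Vhs t') with hQhatdef
  have hVhs_sup : ∀ t, Vhs t = Finset.univ.sup' Finset.univ_nonempty (fun a : A => Qhat t a) :=
    hVhs_eq
  -- value iteration error
  have hQm_all : ∀ i t a, |Qit i t a - Qhat t a| ≤ γ ^ i * Vmax := by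
    intro i
    induction i with
    | zero =>
      intro t a
      have h0 : 0 ≤ Qhat t a := by
        apply Finset.sum_nonneg; intro t' _; apply Finset.sum_nonneg; intro r _
        have := (hVhs_b t').1
        have := hrval r
        have := hD'0 t a t' r
        positivity
      have h1 : Qhat t a ≤ Vmax := by
        apply mdp_sum_weighted_le (D' t a) (hD'0 t a) (hD'1 t a)
        intro t' r
        have h2 := (hVhs_b t').2
        have h3 := hRmax_le r
        nlinarith [hγ0.le]
      rw [hQit0, pow_zero, one_mul, abs_sub_comm, sub_zero, abs_of_nonneg h0]
      exact h1
    | succ i ih =>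
      intro t a
      rw [hQrec i t a]
      have key := mdp_bellman_op_diff (D' t a) (hD'0 t a) (hD'1 t a) rval γ hγ0.le
        (fun t' => Finset.univ.sup' Finset.univ_nonempty (fun b : A => Qit i t' b)) Vhs
        (γ ^ i * Vmax) (fun t' => by
          rw [hVhs_sup t']
          exact mdp_sup'_abs_sub_le _ _ _ (fun b => ih t' b))
      calc |(∑ t' : S', ∑ r : R, D' t a t' r * (rval r + γ *
              Finset.univ.sup' Finset.univ_nonempty (fun b : A => Qit i t' b))) - Qhat t a|
          ≤ γ * (γ ^ i * Vmax) := key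
        _ = γ ^ (i + 1) * Vmax := by ring
  -- simulation error for Vstar
  set d : ℝ := Finset.univ.sup' Finset.univ_nonempty (fun s : S => |Vstar s - Vhs (φ s)|)
    with hddef
  have hd_rec : d ≤ εM * (Vmax / 2) + γ * d := by
    apply Finset.sup'_le
    intro s _
    rw [hVstar s, hVhs_eq (φ s)]
    apply mdp_sup'_abs_sub_le
    intro a
    have hre : (∑ t' : S', ∑ r : R, D' (φ s) a t' r * (rval r + γ * Vhs t'))
        = ∑ s' : S, ∑ r : R, D' (φ s) a (φ s') r * (rval r + γ * Vhs (φ s')) :=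
      (Equiv.sum_comp φ (fun t' => ∑ r : R, D' (φ s) a t' r * (rval r + γ * Vhs t'))).symm
    rw [hre]
    apply mdp_sim_step_bound (D s a) (fun s' r => D' (φ s) a (φ s') r)
      (fun s' r => hD'0 (φ s) a (φ s') r) (hD1 s a)
      (by rw [← hD'1 (φ s) a]; exact Equiv.sum_comp φ (fun t' => ∑ r : R, D' (φ s) a t' r))
      _ _ Vmax (γ * d) εM hVmax0.le
    · intro s' r
      have h1 := (hVstar_b s').1
      have h2 := (hVstar_b s').2
      have h3 := hrval r
      have h4 := hRmax_le r
      rw [abs_le]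
      constructor <;> nlinarith [hγ0.le, hγ1.le]
    · intro s' r
      have he : rval r + γ * Vstar s' - (rval r + γ * Vhs (φ s')) = γ * (Vstar s' - Vhs (φ s')) := by
        ring
      rw [he, abs_mul, abs_of_nonneg hγ0.le]
      exact mul_le_mul_of_nonneg_left
        (Finset.le_sup' (fun s : S => |Vstar s - Vhs (φ s)|) (Finset.mem_univ s')) hγ0.le
    · exact happrox s a
  have hd6 : d ≤ β * ε / 6 := by
    have hc : εM * (Vmax / 2) = β * (β * ε / 6) := by
      rw [hεMdef, hVmaxdef]
      field_simp
      ring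
    rw [hc] at hd_rec
    nlinarith
  -- simulation error for Vπ
  set d' : ℝ := Finset.univ.sup' Finset.univ_nonempty (fun s : S => |Vπ s - Vhp (φ s)|)
    with hd'def
  have hd'_rec : d' ≤ εM * (Vmax / 2) + γ * d' := by
    apply Finset.sup'_le
    intro s _
    rw [hVπ s, hVhp_eq (φ s), Equiv.symm_apply_apply]
    have hre : (∑ t' : S', ∑ r : R, D' (φ s) (π s) t' r * (rval r + γ * Vhp t'))
        = ∑ s' : S, ∑ r : R, D' (φ s) (π s) (φ s') r * (rval r + γ * Vhp (φ s')) :=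
      (Equiv.sum_comp φ (fun t' => ∑ r : R, D' (φ s) (π s) t' r * (rval r + γ * Vhp t'))).symm
    rw [hre]
    apply mdp_sim_step_bound (D s (π s)) (fun s' r => D' (φ s) (π s) (φ s') r)
      (fun s' r => hD'0 (φ s) (π s) (φ s') r) (hD1 s (π s))
      (by rw [← hD'1 (φ s) (π s)]; exact Equiv.sum_comp φ (fun t' => ∑ r : R, D' (φ s) (π s) t' r))
      _ _ Vmax (γ * d') εM hVmax0.le
    · intro s' r
      have h1 := (hVπ_b s').1
      have h2 := (hVπ_b s').2
      have h3 := hrval r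
      have h4 := hRmax_le r
      rw [abs_le]
      constructor <;> nlinarith [hγ0.le, hγ1.le]
    · intro s' r
      have he : rval r + γ * Vπ s' - (rval r + γ * Vhp (φ s')) = γ * (Vπ s' - Vhp (φ s')) := by
        ring
      rw [he, abs_mul, abs_of_nonneg hγ0.le]
      exact mul_le_mul_of_nonneg_left
        (Finset.le_sup' (fun s : S => |Vπ s - Vhp (φ s)|) (Finset.mem_univ s')) hγ0.le
    · exact happrox s (π s)
  have hd'6 : d' ≤ β * ε / 6 := by
    have hc : εM * (Vmax / 2) = β * (β * ε / 6) := by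
      rw [hεMdef, hVmaxdef]
      field_simp
      ring
    rw [hc] at hd'_rec
    nlinarith
  -- greedy loss on M̂
  set d2 : ℝ := Finset.univ.sup' Finset.univ_nonempty (fun t : S' => Vhs t - Vhp t) with hd2def
  have hd2_rec : d2 ≤ 2 * (γ ^ m * Vmax) + γ * d2 := by
    apply Finset.sup'_le
    intro t _
    obtain ⟨astar, _, hastar⟩ := Finset.exists_mem_eq_sup' Finset.univ_nonempty
      (fun a : A => Qhat t a)
    have h1 : Vhs t = Qhat t astar := by rw [hVhs_sup t, hastar]
    have hg : Qit m t astar ≤ Qit m t (π (φ.symm t)) := by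
      have := hgreedy (φ.symm t) astar
      rwa [Equiv.apply_symm_apply] at this
    have h2 : Qhat t astar ≤ Qhat t (π (φ.symm t)) + 2 * (γ ^ m * Vmax) := by
      have e1 := abs_le.1 (hQm_all m t astar)
      have e2 := abs_le.1 (hQm_all m t (π (φ.symm t)))
      have e1' := e1.1
      have e1'' := e1.2
      have e2' := e2.1
      have e2'' := e2.2
      linarith
    have h3 : Qhat t (π (φ.symm t)) - Vhp t ≤ γ * d2 := by
      rw [hVhp_eq t, hQhatdef]
      rw [mdp_bellman_op_sub (D' t (π (φ.symm t))) rval γ Vhs Vhp]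
      apply mdp_sum_weighted_le (D' t (π (φ.symm t))) (hD'0 t _) (hD'1 t _)
      intro t' r
      have := Finset.le_sup' (fun t : S' => Vhs t - Vhp t) (Finset.mem_univ t')
      exact mul_le_mul_of_nonneg_left this hγ0.le
    linarith
  have hd2b : β * d2 ≤ 2 * (γ ^ m * Vmax) := by
    have he : β * d2 = d2 - γ * d2 := by rw [hβdef]; ring
    linarith
  -- the numerical part
  have hεβ2 : 0 < ε * β ^ 2 := by positivity
  set K : ℝ := 2 * Rmax / (ε * β ^ 2) with hKdef
  have hK0 : 0 < K := by positivity
  have hK2 : (2 : ℝ) ≤ K := by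
    rw [hKdef, le_div_iff₀ hεβ2]
    have h1 : ε * β ≤ Rmax := by
      have := (le_div_iff₀ hβ0).1 hε1
      linarith
    nlinarith
  have hlogK : Real.log 2 ≤ Real.log K := Real.log_le_log (by norm_num) hK2
  have hlog2 : (0.6931471803 : ℝ) < Real.log 2 := Real.log_two_gt_d9
  have hL1 : β + β ^ 2 / 2 + β ^ 3 / 3 ≤ -Real.log γ := by
    have := mdp_cubic_le_neg_log_one_sub (x := β) hβ0.le hβ1
    have he : (1 : ℝ) - β = γ := by rw [hβdef]; ring
    rwa [he] at this
  have h3β : (0:ℝ) < 1 - β / 3 := by linarith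
  have hL2 : -Real.log (1 - β / 3) ≤ β / (3 - β) := by
    have h := Real.log_le_sub_one_of_pos (x := (1 - β / 3)⁻¹) (by positivity)
    rw [Real.log_inv] at h
    have he : (1 - β / 3)⁻¹ - 1 = β / (3 - β) := by
      rw [show (1:ℝ) - β / 3 = (3 - β) / 3 by ring, inv_div,
        div_sub_one (by intro hc; rw [sub_eq_zero] at hc; linarith : (3:ℝ) - β ≠ 0)]
      congr 1
      ring
    linarith [he ▸ h]
  have hKey : β * (-Real.log (1 - β / 3)) ≤ Real.log K * (-Real.log γ - β) := by
    have e1 : β ^ 2 / 2 + β ^ 3 / 3 ≤ -Real.log γ - β := by linarith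
    have e2 : β * (β / (3 - β)) ≤ Real.log 2 * (β ^ 2 / 2 + β ^ 3 / 3) :=
      mdp_poly_ineq β hβ0 hβ1
    have e3 : Real.log 2 * (β ^ 2 / 2 + β ^ 3 / 3) ≤ Real.log K * (-Real.log γ - β) := by
      apply mul_le_mul hlogK e1 (by positivity) (le_trans (Real.log_nonneg (by norm_num)) hlogK)
    calc β * (-Real.log (1 - β / 3)) ≤ β * (β / (3 - β)) :=
          mul_le_mul_of_nonneg_left hL2 hβ0.le
      _ ≤ Real.log 2 * (β ^ 2 / 2 + β ^ 3 / 3) := e2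
      _ ≤ Real.log K * (-Real.log γ - β) := e3
  have hγm : γ ^ m ≤ (1 - β / 3) / K := by
    have hm : Real.log K / β ≤ (m : ℝ) := by
      have h := Nat.le_ceil ((1 / β) * Real.log (2 * Rmax / (ε * β ^ 2)))
      rw [← hKdef] at h
      calc Real.log K / β = (1 / β) * Real.log K := by ring
        _ ≤ (m : ℝ) := h
    have hlogγ : Real.log γ < 0 := Real.log_neg hγ0 hγ1
    have step1 : (m : ℝ) * Real.log γ ≤ (Real.log K / β) * Real.log γ :=
      mul_le_mul_of_nonpos_right hm hlogγ.le
    have step2 : (Real.log K / β) * Real.log γ ≤ Real.log ((1 - β / 3) / K) := by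
      rw [Real.log_div (by linarith) (ne_of_gt hK0)]
      rw [div_mul_eq_mul_div, div_le_iff₀ hβ0]
      nlinarith [hKey]
    calc γ ^ m = Real.exp ((m : ℝ) * Real.log γ) := by
          rw [← Real.log_pow, Real.exp_log (by positivity)]
      _ ≤ Real.exp (Real.log ((1 - β / 3) / K)) := Real.exp_le_exp.2 (step1.trans step2)
      _ = (1 - β / 3) / K := Real.exp_log (by positivity)
  have hd2ε : β * d2 ≤ β * ((1 - β / 3) * ε) := by
    have h1 : 2 * (γ ^ m * Vmax) ≤ 2 * Vmax * ((1 - β / 3) / K) := by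
      nlinarith [hγm, hVmax0]
    have h2 : 2 * Vmax * ((1 - β / 3) / K) = β * ((1 - β / 3) * ε) := by
      rw [hKdef, hVmaxdef]
      field_simp
    calc β * d2 ≤ 2 * (γ ^ m * Vmax) := hd2b
      _ ≤ 2 * Vmax * ((1 - β / 3) / K) := h1
      _ = β * ((1 - β / 3) * ε) := h2
  have hd2f : d2 ≤ (1 - β / 3) * ε := le_of_mul_le_mul_left (by linarith [hd2ε]) hβ0
  -- final assembly
  intro s
  have h1 : Vstar s - Vhs (φ s) ≤ d :=
    le_trans (le_abs_self _) (Finset.le_sup' (fun s : S => |Vstar s - Vhs (φ s)|)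
      (Finset.mem_univ s))
  have h3 : Vhp (φ s) - Vπ s ≤ d' := by
    have := Finset.le_sup' (fun s : S => |Vπ s - Vhp (φ s)|) (Finset.mem_univ s)
    have habs := neg_abs_le (Vπ s - Vhp (φ s))
    linarith
  have h2 : Vhs (φ s) - Vhp (φ s) ≤ d2 :=
    Finset.le_sup' (fun t : S' => Vhs t - Vhp t) (Finset.mem_univ (φ s))
  have hexp : (1 - β / 3) * ε = ε - β * ε / 3 := by ring
  rw [ge_iff_le, sub_le_iff_le_add]
  nlinarith [hd6, hd'6, hd2f]
end

section
/- Let R = ⟨A, S, R, D, γ⟩ be an RDP whose dynamics are represented by a finite transducer T = ⟨Q, q₀, S, τ, θ⟩ with n = |Q| states, let p ∈ (0,1) be a stop probability, let A (with alphabet Σ) be the PDFA associated to R and p, and let M be the MDP induced by A. Let α > 0 and set ε_Q = (1−p)·α/(|A|·n·|Σ|). If Â is an ε_Q-approximation of the PDFA A, then the MDP M̂ induced by Â is an α-approximation of M. -/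
/-- Let `A` be the PDFA associated to an RDP (with dynamics transducer
`⟨Q, q₀, S, τ, θ⟩`, `n = |Q|`) and stop probability `p`, with alphabet `Σ` (modelled by the
type `Sig` with injection `emb` onto the support of the dynamics), and let `M` be the MDP
induced by `A`. If `Â` is an `ε_Q`-approximation of `A` with
`ε_Q = (1−p)·α/(|A|·n·|Σ|)`, then the MDP `M̂` induced by `Â` is an α-approximation
of `M`. -/
theorem pdfa_approx_implies_induced_mdp_approx
    {A S Q QH R Sig : Type*} [Fintype A] [Nonempty A] [Fintype S] [Fintype Q] [Fintype QH]
    [Fintype R] [Fintype Sig]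
    [DecidableEq A] [DecidableEq Q] [DecidableEq QH] [DecidableEq R]
    -- rewards: finite set of non-negative reals; discount factor; stop probability
    (rval : R → ℝ) (hrval : ∀ r, 0 ≤ rval r)
    (γ : ℝ) (hγ0 : 0 < γ) (hγ1 : γ < 1)
    (p : ℝ) (hp0 : 0 < p) (hp1 : p < 1)
    -- approximation accuracy
    (α : ℝ) (hα : 0 < α)
    -- dynamics function of the RDP, represented by the transducer ⟨Q, q₀, S, τ, θ⟩
    (D : List S → A → S → R → ℝ)
    (hD0 : ∀ h a s r, 0 ≤ D h a s r)
    (hD1 : ∀ h a, (∑ s : S, ∑ r : R, D h a s r) = 1)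
    (q₀ : Q) (τ : Q → S → Q) (θ : Q → A → S → R → ℝ)
    (hrep : ∀ h a s r, D h a s r = θ (tauStar τ q₀ h) a s r)
    -- the alphabet Σ = {(a,s,r) : D(s,r|h,a) > 0 for some h}, as a finite type Sig
    (emb : Sig → A × S × R) (hemb : Function.Injective emb)
    (hrange : ∀ x : A × S × R,
      (∃ h : List S, 0 < D h x.1 x.2.1 x.2.2) ↔ x ∈ Set.range emb)
    -- probability function of the PDFA A associated to the RDP and stop probability p:
    -- λ(q,(a,s,r)) = ((1−p)/|A|)·θ(q)(a,s,r); its transitions are τ'(q,(a,s,r)) = τ(q,s)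
    (lamA : Q → Sig → ℝ)
    (hlamA : ∀ q σ, lamA q σ =
      ((1 - p) / (Fintype.card A : ℝ)) * θ q (emb σ).1 (emb σ).2.1 (emb σ).2.2)
    -- the PDFA Â: same alphabet, states QH, transitions tauH, probabilities lamH, stop lamHstop
    (tauH : QH → Sig → QH)
    (lamH : QH → Sig → ℝ) (lamHstop : QH → ℝ)
    (hlamH0 : ∀ t σ, 0 ≤ lamH t σ) (hlamHstop0 : ∀ t, 0 ≤ lamHstop t)
    (hlamHsum : ∀ t, lamHstop t + (∑ σ : Sig, lamH t σ) = 1)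
    -- Â is an ε_Q-approximation of A: transition-preserving isomorphism φ,
    -- probabilities within ε_Q = (1−p)·α/(|A|·n·|Σ|), and zero-preserving
    (φ : Q ≃ QH)
    (htrans : ∀ q σ, tauH (φ q) σ = φ (τ q (emb σ).2.1))
    (happrox : ∀ q σ, |lamA q σ - lamH (φ q) σ| <
      (1 - p) * α / ((Fintype.card A : ℝ) * (Fintype.card Q : ℝ) * (Fintype.card Sig : ℝ)))
    (hzero : ∀ q σ, lamA q σ = 0 → lamH (φ q) σ = 0) :
    -- conclusion: the induced MDP M̂ is an α-approximation of the induced MDP M, i.e.,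
    -- for every state q and action a the L₁-distance of the induced dynamics
    -- D^M(q',r|q,a) = (|A|/(1−p))·∑_{σ=(a,s,r) : τ(q,s)=q'} λ(q,σ)  (and similarly for M̂)
    -- is at most α
    ∀ (q : Q) (a : A),
      (∑ q' : Q, ∑ r : R,
        |((Fintype.card A : ℝ) / (1 - p)) *
            (∑ σ : Sig,
              if (emb σ).1 = a ∧ (emb σ).2.2 = r ∧ τ q (emb σ).2.1 = q' then lamA q σ else 0)
          - ((Fintype.card A : ℝ) / (1 - p)) *
            (∑ σ : Sig,
              if (emb σ).1 = a ∧ (emb σ).2.2 = r ∧ tauH (φ q) σ = φ q' then lamH (φ q) σ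
              else 0)|)
        ≤ α := by
  intro q a
  have h1p : (0:ℝ) < 1 - p := by linarith
  have hAc : (0:ℝ) < (Fintype.card A : ℝ) := by exact_mod_cast Fintype.card_pos
  have hQne : Nonempty Q := ⟨q₀⟩
  have hQc : (1:ℝ) ≤ (Fintype.card Q : ℝ) := by exact_mod_cast Fintype.card_pos
  set C : ℝ := (Fintype.card A : ℝ) / (1 - p) with hCdef
  have hC : 0 ≤ C := by positivity
  set ε : ℝ := (1 - p) * α /
      ((Fintype.card A : ℝ) * (Fintype.card Q : ℝ) * (Fintype.card Sig : ℝ)) with hεdef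
  set d : Sig → ℝ := fun σ => lamA q σ - lamH (φ q) σ with hd
  have hcond : ∀ (q' : Q) (σ : Sig), (tauH (φ q) σ = φ q') ↔ (τ q (emb σ).2.1 = q') := by
    intro q' σ
    rw [htrans]
    exact Equiv.apply_eq_iff_eq φ
  have step1 : (∑ q' : Q, ∑ r : R,
        |C * (∑ σ : Sig,
              if (emb σ).1 = a ∧ (emb σ).2.2 = r ∧ τ q (emb σ).2.1 = q' then lamA q σ else 0)
          - C * (∑ σ : Sig,
              if (emb σ).1 = a ∧ (emb σ).2.2 = r ∧ tauH (φ q) σ = φ q' then lamH (φ q) σ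
              else 0)|)
      ≤ C * ∑ σ : Sig, |d σ| := by
    have hinner : ∀ (q' : Q) (r : R),
        |C * (∑ σ : Sig,
              if (emb σ).1 = a ∧ (emb σ).2.2 = r ∧ τ q (emb σ).2.1 = q' then lamA q σ else 0)
          - C * (∑ σ : Sig,
              if (emb σ).1 = a ∧ (emb σ).2.2 = r ∧ tauH (φ q) σ = φ q' then lamH (φ q) σ
              else 0)|
        ≤ C * ∑ σ : Sig,
              if (emb σ).1 = a ∧ (emb σ).2.2 = r ∧ τ q (emb σ).2.1 = q' then |d σ| else 0 := by
      intro q' r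
      have hrw : (∑ σ : Sig,
            if (emb σ).1 = a ∧ (emb σ).2.2 = r ∧ tauH (φ q) σ = φ q' then lamH (φ q) σ else 0)
          = ∑ σ : Sig,
            if (emb σ).1 = a ∧ (emb σ).2.2 = r ∧ τ q (emb σ).2.1 = q' then lamH (φ q) σ else 0 := by
        apply Finset.sum_congr rfl
        intro σ _
        simp [hcond q' σ]
      rw [hrw, ← mul_sub, abs_mul, abs_of_nonneg hC, ← Finset.sum_sub_distrib]
      apply mul_le_mul_of_nonneg_left _ hC
      calc |∑ σ : Sig,
              ((if (emb σ).1 = a ∧ (emb σ).2.2 = r ∧ τ q (emb σ).2.1 = q' then lamA q σ else 0)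
              - (if (emb σ).1 = a ∧ (emb σ).2.2 = r ∧ τ q (emb σ).2.1 = q' then lamH (φ q) σ
                  else 0))|
          ≤ ∑ σ : Sig,
              |(if (emb σ).1 = a ∧ (emb σ).2.2 = r ∧ τ q (emb σ).2.1 = q' then lamA q σ else 0)
              - (if (emb σ).1 = a ∧ (emb σ).2.2 = r ∧ τ q (emb σ).2.1 = q' then lamH (φ q) σ
                  else 0)| := Finset.abs_sum_le_sum_abs _ _
        _ = ∑ σ : Sig,
              if (emb σ).1 = a ∧ (emb σ).2.2 = r ∧ τ q (emb σ).2.1 = q' then |d σ| else 0 := by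
            apply Finset.sum_congr rfl
            intro σ _
            split_ifs <;> simp [hd]
    calc (∑ q' : Q, ∑ r : R,
        |C * (∑ σ : Sig,
              if (emb σ).1 = a ∧ (emb σ).2.2 = r ∧ τ q (emb σ).2.1 = q' then lamA q σ else 0)
          - C * (∑ σ : Sig,
              if (emb σ).1 = a ∧ (emb σ).2.2 = r ∧ tauH (φ q) σ = φ q' then lamH (φ q) σ
              else 0)|)
        ≤ ∑ q' : Q, ∑ r : R, C * ∑ σ : Sig,
              if (emb σ).1 = a ∧ (emb σ).2.2 = r ∧ τ q (emb σ).2.1 = q' then |d σ| else 0 := by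
          apply Finset.sum_le_sum
          intro q' _
          apply Finset.sum_le_sum
          intro r _
          exact hinner q' r
      _ = C * ∑ σ : Sig, ∑ q' : Q, ∑ r : R,
              if (emb σ).1 = a ∧ (emb σ).2.2 = r ∧ τ q (emb σ).2.1 = q' then |d σ| else 0 := by
          simp only [← Finset.mul_sum]
          congr 1
          calc (∑ q' : Q, ∑ r : R, ∑ σ : Sig,
                if (emb σ).1 = a ∧ (emb σ).2.2 = r ∧ τ q (emb σ).2.1 = q' then |d σ| else 0)
              = ∑ q' : Q, ∑ σ : Sig, ∑ r : R,
                if (emb σ).1 = a ∧ (emb σ).2.2 = r ∧ τ q (emb σ).2.1 = q' then |d σ| else 0 :=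
                Finset.sum_congr rfl fun q' _ => Finset.sum_comm
            _ = ∑ σ : Sig, ∑ q' : Q, ∑ r : R,
                if (emb σ).1 = a ∧ (emb σ).2.2 = r ∧ τ q (emb σ).2.1 = q' then |d σ| else 0 :=
                Finset.sum_comm
      _ ≤ C * ∑ σ : Sig, |d σ| := by
          apply mul_le_mul_of_nonneg_left _ hC
          apply Finset.sum_le_sum
          intro σ _
          calc (∑ q' : Q, ∑ r : R,
                if (emb σ).1 = a ∧ (emb σ).2.2 = r ∧ τ q (emb σ).2.1 = q' then |d σ| else 0)
              = ∑ q' : Q, ∑ r : R,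
                if (emb σ).2.2 = r then
                  (if (emb σ).1 = a ∧ τ q (emb σ).2.1 = q' then |d σ| else 0) else 0 := by
                apply Finset.sum_congr rfl; intro q' _
                apply Finset.sum_congr rfl; intro r _
                rw [← ite_and]
                exact if_congr (by tauto) rfl rfl
            _ = ∑ q' : Q, if (emb σ).1 = a ∧ τ q (emb σ).2.1 = q' then |d σ| else 0 := by
                apply Finset.sum_congr rfl; intro q' _
                rw [Finset.sum_ite_eq]
                simp
            _ ≤ |d σ| := by
                rcases eq_or_ne (emb σ).1 a with h | h
                · calc (∑ q' : Q, if (emb σ).1 = a ∧ τ q (emb σ).2.1 = q' then |d σ| else 0)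
                      = ∑ q' : Q, if τ q (emb σ).2.1 = q' then |d σ| else 0 := by
                        apply Finset.sum_congr rfl; intro q' _; simp [h]
                    _ = |d σ| := by rw [Finset.sum_ite_eq]; simp
                    _ ≤ |d σ| := le_rfl
                · simp [h]
  refine le_trans step1 ?_
  have hdσ : ∀ σ : Sig, |d σ| ≤ ε := by
    intro σ
    exact le_of_lt (happrox q σ)
  have step2 : C * ∑ σ : Sig, |d σ| ≤ C * ((Fintype.card Sig : ℝ) * ε) := by
    apply mul_le_mul_of_nonneg_left _ hC
    calc (∑ σ : Sig, |d σ|) ≤ ∑ _σ : Sig, ε := Finset.sum_le_sum fun σ _ => hdσ σ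
      _ = (Fintype.card Sig : ℝ) * ε := by simp [Finset.sum_const, mul_comm]
  refine le_trans step2 ?_
  rcases Nat.eq_zero_or_pos (Fintype.card Sig) with hS | hS
  · simp [hεdef, hS]
    linarith
  · have hSc : (0:ℝ) < (Fintype.card Sig : ℝ) := by exact_mod_cast hS
    have heq : C * ((Fintype.card Sig : ℝ) * ε) = α / (Fintype.card Q : ℝ) := by
      rw [hCdef, hεdef]
      field_simp
    rw [heq]
    exact div_le_self (le_of_lt hα) hQc
end
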